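/- arXiv:1404.2012 — 11 statements merged into one kernel-verified Lean document; each statement's English description precedes it below -/
import Mathlib

section
/- Let u_k(t), b_k(t) (k ∈ ℤ) be real differentiable functions on an interval I satisfying the unrestricted Toda chain equations b_k' = u_{k+1} − u_k and u_k' = u_k(b_k − b_{k−1}) for all k ∈ ℤ and t ∈ I, and assume u_k(t) ≠ 0 for all k ∈ ℤ, t ∈ I. Fix j ∈ ℤ. Then b_j(t) = 0 for all t ∈ I if and only if the reflection conditions u_{j+n}(t) = u_{j−n+1}(t) and b_{j+n−1}(t) = −b_{j−n+1}(t) hold for all n ∈ ℤ and all t ∈ I. -/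
/-!
If `b j ≡ 0`, the equation for `b j` gives `u (j+1) = u j`. From there the reflection
conditions propagate outwards: differentiating `u k = u l` and cancelling the nonvanishing
factor `u k` gives the next `b`-reflection, and differentiating `b k = -b l` gives the next
`u`-reflection. The converse is the case `n = 1`.
-/

open Set

variable {I : Set ℝ} {u b : ℤ → ℝ → ℝ}

theorem Set.EqOn.hasDerivAt_unique {f g : ℝ → ℝ} {f' g' t : ℝ} (hfg : EqOn f g I)
    (hI : IsOpen I) (ht : t ∈ I) (hf : HasDerivAt f f' t) (hg : HasDerivAt g g' t) :
    f' = g' :=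
  (hf.congr_of_eventuallyEq (hfg.symm.eventuallyEq_of_mem (hI.mem_nhds ht))).unique hg

theorem toda_b_reflect_of_u_eq (hI : IsOpen I)
    (hToda_u : ∀ k : ℤ, ∀ t ∈ I, HasDerivAt (u k) (u k t * (b k t - b (k - 1) t)) t)
    (hne : ∀ k : ℤ, ∀ t ∈ I, u k t ≠ 0) {k l : ℤ}
    (hu : EqOn (u k) (u l) I) (hb : EqOn (b (k - 1)) (fun t => -b l t) I) :
    EqOn (b k) (fun t => -b (l - 1) t) I := by
  intro t ht
  have hderiv := hu.hasDerivAt_unique hI ht (hToda_u k t ht) (hToda_u l t ht)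
  rw [hu ht] at hderiv
  have hdiff := mul_left_cancel₀ (hu ht ▸ hne k t ht) hderiv
  linarith [hb ht]

theorem toda_u_reflect_of_b_reflect (hI : IsOpen I)
    (hToda_b : ∀ k : ℤ, ∀ t ∈ I, HasDerivAt (b k) (u (k + 1) t - u k t) t) {k l : ℤ}
    (hb : EqOn (b k) (fun t => -b l t) I) (hu : EqOn (u k) (u (l + 1)) I) :
    EqOn (u (k + 1)) (u l) I := by
  intro t ht
  have hderiv := hb.hasDerivAt_unique hI ht (hToda_b k t ht) (hToda_b l t ht).neg
  linarith [hu ht]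

theorem toda_reflection_nat_of_b_eq_zero (hI : IsOpen I)
    (hToda_b : ∀ k : ℤ, ∀ t ∈ I, HasDerivAt (b k) (u (k + 1) t - u k t) t)
    (hToda_u : ∀ k : ℤ, ∀ t ∈ I, HasDerivAt (u k) (u k t * (b k t - b (k - 1) t)) t)
    (hne : ∀ k : ℤ, ∀ t ∈ I, u k t ≠ 0) {j : ℤ} (hb : EqOn (b j) 0 I) (m : ℕ) :
    EqOn (b (j + m)) (fun t => -b (j - m) t) I ∧ EqOn (u (j + m + 1)) (u (j - m)) I := by
  induction m with
  | zero =>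
    refine ⟨fun t ht => by simp [hb ht], fun t ht => ?_⟩
    have hderiv := hb.hasDerivAt_unique hI ht (hToda_b j t ht) (hasDerivAt_const t 0)
    simp only [Nat.cast_zero, add_zero, sub_zero]
    linarith
  | succ m ih =>
    rw [Nat.cast_succ, ← add_assoc, ← sub_sub]
    have hb' : EqOn (b (j + m + 1)) (fun t => -b (j - m - 1) t) I :=
      toda_b_reflect_of_u_eq hI hToda_u hne ih.2 (by simpa using ih.1)
    exact ⟨hb', toda_u_reflect_of_b_reflect hI hToda_b hb' (by simpa using ih.2)⟩

theorem toda_reflection_of_b_eq_zero (hI : IsOpen I)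
    (hToda_b : ∀ k : ℤ, ∀ t ∈ I, HasDerivAt (b k) (u (k + 1) t - u k t) t)
    (hToda_u : ∀ k : ℤ, ∀ t ∈ I, HasDerivAt (u k) (u k t * (b k t - b (k - 1) t)) t)
    (hne : ∀ k : ℤ, ∀ t ∈ I, u k t ≠ 0) {j : ℤ} (hb : EqOn (b j) 0 I) (m : ℤ) :
    EqOn (b (j + m)) (fun t => -b (j - m) t) I ∧ EqOn (u (j + m + 1)) (u (j - m)) I := by
  have hnat := toda_reflection_nat_of_b_eq_zero hI hToda_b hToda_u hne hb
  cases m with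
  | ofNat m => exact hnat m
  | negSucc m =>
    have hb' := (hnat (m + 1)).1
    have hu' := (hnat m).2
    rw [Nat.cast_succ, ← add_assoc] at hb'
    have e₁ : j + Int.negSucc m = j - (m + 1) := by rw [Int.negSucc_eq]; ring
    have e₂ : j - Int.negSucc m = j + m + 1 := by rw [Int.negSucc_eq]; ring
    have e₃ : j - (m + 1) + 1 = j - m := by ring
    rw [e₁, e₂, e₃]
    exact ⟨fun t ht => by linarith [hb' ht], hu'.symm⟩

theorem toda_boundary_iff_reflection_general
    (I : Set ℝ) (hIopen : IsOpen I)
    (u b : ℤ → ℝ → ℝ)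
    (hToda_b : ∀ k : ℤ, ∀ t ∈ I, HasDerivAt (b k) (u (k + 1) t - u k t) t)
    (hToda_u : ∀ k : ℤ, ∀ t ∈ I, HasDerivAt (u k) (u k t * (b k t - b (k - 1) t)) t)
    (hne : ∀ k : ℤ, ∀ t ∈ I, u k t ≠ 0) (j : ℤ) :
    (∀ t ∈ I, b j t = 0) ↔
      (∀ n : ℤ, ∀ t ∈ I,
        u (j + n) t = u (j - n + 1) t ∧ b (j + n - 1) t = -b (j - n + 1) t) := by
  constructor
  · intro hb n t ht
    obtain ⟨hbn, hun⟩ := toda_reflection_of_b_eq_zero hIopen hToda_b hToda_u hne hb (n - 1)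
    have e₁ : j + (n - 1) + 1 = j + n := by ring
    have e₂ : j - (n - 1) = j - n + 1 := by ring
    rw [e₁, e₂] at hun
    rw [e₂, ← add_sub_assoc] at hbn
    exact ⟨hun ht, hbn ht⟩
  · intro h t ht
    have hb := (h 1 t ht).2
    rw [add_sub_cancel_right, sub_add_cancel] at hb
    linarith

/-- For a solution of the unrestricted Toda chain with nonvanishing
`u k`, the boundary condition `b j = 0` on the interval `I` is equivalent to the
reflection ("type B") conditions `u (j+n) = u (j-n+1)`, `b (j+n-1) = -b (j-n+1)`. -/
theorem toda_boundary_iff_reflection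
    (I : Set ℝ) (hIopen : IsOpen I) (hIconn : I.OrdConnected)
    (u b : ℤ → ℝ → ℝ)
    (hToda_b : ∀ k : ℤ, ∀ t ∈ I, HasDerivAt (b k) (u (k + 1) t - u k t) t)
    (hToda_u : ∀ k : ℤ, ∀ t ∈ I, HasDerivAt (u k) (u k t * (b k t - b (k - 1) t)) t)
    (hne : ∀ k : ℤ, ∀ t ∈ I, u k t ≠ 0) (j : ℤ) :
    (∀ t ∈ I, b j t = 0) ↔
      (∀ n : ℤ, ∀ t ∈ I,
        u (j + n) t = u (j - n + 1) t ∧ b (j + n - 1) t = -b (j - n + 1) t) :=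
  toda_boundary_iff_reflection_general I hIopen u b hToda_b hToda_u hne j
end

section
/- Let u_k(t), b_k(t) (k ∈ ℤ) be real differentiable functions on an interval I satisfying the unrestricted Toda chain equations b_k' = u_{k+1} − u_k and u_k' = u_k(b_k − b_{k−1}) for all k ∈ ℤ and t ∈ I. Let N be a positive integer and assume u_k(t) ≠ 0 for all t ∈ I and all k with −N+1 ≤ k ≤ N−2. If b_{−1}(t) = 0 for all t ∈ I and u_{N−1}(t) = 0 for all t ∈ I, then u_{−N}(t) = 0 for all t ∈ I. -/
/-- For a solution of the unrestricted Toda chain, if `b (-1) = 0`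
and `u (N-1) = 0` on the interval `I` (with `u k` nonvanishing for
`-N+1 ≤ k ≤ N-2`), then `u (-N) = 0` on `I`. -/
theorem toda_reflection_molecule
    (I : Set ℝ) (hIopen : IsOpen I) (hIconn : I.OrdConnected)
    (u b : ℤ → ℝ → ℝ)
    (hToda_b : ∀ k : ℤ, ∀ t ∈ I, HasDerivAt (b k) (u (k + 1) t - u k t) t)
    (hToda_u : ∀ k : ℤ, ∀ t ∈ I, HasDerivAt (u k) (u k t * (b k t - b (k - 1) t)) t)
    (N : ℕ) (hN : 0 < N)
    (hne : ∀ k : ℤ, -(N : ℤ) + 1 ≤ k → k ≤ (N : ℤ) - 2 → ∀ t ∈ I, u k t ≠ 0)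
    (hbm1 : ∀ t ∈ I, b (-1) t = 0)
    (huN : ∀ t ∈ I, u ((N : ℤ) - 1) t = 0) :
    ∀ t ∈ I, u (-(N : ℤ)) t = 0 := by
  have hmem : ∀ t ∈ I, I ∈ nhds t := fun t ht => hIopen.mem_nhds ht
  have key : ∀ k : ℕ, (k : ℤ) + 1 ≤ (N : ℤ) →
      (∀ t ∈ I, u (-1 - (k : ℤ)) t = u (k : ℤ) t) ∧
      ((k : ℤ) + 2 ≤ (N : ℤ) → ∀ t ∈ I, b (-2 - (k : ℤ)) t = -(b (k : ℤ) t)) := by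
    intro k
    induction k with
    | zero =>
      intro _
      have P0 : ∀ t ∈ I, u (-1 - ((0:ℕ) : ℤ)) t = u ((0:ℕ) : ℤ) t := by
        intro t ht
        have h1 := hToda_b (-1) t ht
        norm_num at h1
        have h2 : HasDerivAt (b (-1)) 0 t := by
          have he : b (-1) =ᶠ[nhds t] fun _ => (0 : ℝ) :=
            Filter.eventuallyEq_of_mem (hmem t ht) (fun x hx => hbm1 x hx)
          exact (hasDerivAt_const t (0 : ℝ)).congr_of_eventuallyEq he
        have h3 := h1.unique h2
        norm_num
        linarith
      refine ⟨P0, ?_⟩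
      intro hN2 t ht
      have h1 := hToda_u 0 t ht
      norm_num at h1
      -- h1 : HasDerivAt (u 0) (u 0 t * (b 0 t - b (-1) t)) t
      have h2 : HasDerivAt (u 0) (u (-1) t * (b (-1) t - b (-1 - 1) t)) t := by
        have hd := hToda_u (-1) t ht
        have he : u (-1) =ᶠ[nhds t] u 0 :=
          Filter.eventuallyEq_of_mem (hmem t ht)
            (fun x hx => by have := P0 x hx; norm_num at this; exact this)
        exact hd.congr_of_eventuallyEq he.symm
      have h3 := h1.unique h2
      have hb : b (-1) t = 0 := hbm1 t ht
      have hP : u (-1) t = u 0 t := by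
        have := P0 t ht; norm_num at this; exact this
      have hu0 : u 0 t ≠ 0 := hne 0 (by omega) (by omega) t ht
      rw [hb, hP] at h3
      norm_num at h3 ⊢
      have h5 := mul_left_cancel₀ hu0
        (show u 0 t * b 0 t = u 0 t * (-(b (-2) t)) by rw [h3]; ring)
      linarith
    | succ k ih =>
      intro hk1
      push_cast at hk1
      obtain ⟨Pk, Qk'⟩ := ih (by omega)
      have Qk := Qk' (by omega)
      have Pk1 : ∀ t ∈ I, u (-2 - (k : ℤ)) t = u ((k : ℤ) + 1) t := by
        intro t ht
        have h1 : HasDerivAt (b (-2 - (k : ℤ))) (u (-1 - (k : ℤ)) t - u (-2 - (k : ℤ)) t) t := by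
          have := hToda_b (-2 - (k : ℤ)) t ht
          have e : (-2 - (k : ℤ)) + 1 = -1 - k := by ring
          rw [e] at this; exact this
        have h2 : HasDerivAt (b (-2 - (k : ℤ))) (-(u ((k : ℤ) + 1) t - u (k : ℤ) t)) t := by
          have hd := (hToda_b (k : ℤ) t ht).neg
          have he : b (-2 - (k : ℤ)) =ᶠ[nhds t] fun s => -(b (k : ℤ) s) :=
            Filter.eventuallyEq_of_mem (hmem t ht) (fun x hx => Qk x hx)
          exact hd.congr_of_eventuallyEq he
        have h3 := h1.unique h2
        have hP := Pk t ht
        linarith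
      constructor
      · intro t ht
        have := Pk1 t ht
        have e : -1 - ((k : ℤ) + 1) = -2 - k := by ring
        push_cast
        rw [e]
        exact this
      · intro h2N t ht
        push_cast at h2N
        have h1 := hToda_u ((k : ℤ) + 1) t ht
        have e1 : ((k : ℤ) + 1) - 1 = k := by ring
        rw [e1] at h1
        have h2 : HasDerivAt (u ((k : ℤ) + 1))
            (u (-2 - (k : ℤ)) t * (b (-2 - (k : ℤ)) t - b ((-2 - (k : ℤ)) - 1) t)) t := by
          have hd := hToda_u (-2 - (k : ℤ)) t ht
          have he : u (-2 - (k : ℤ)) =ᶠ[nhds t] u ((k : ℤ) + 1) :=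
            Filter.eventuallyEq_of_mem (hmem t ht) (fun x hx => Pk1 x hx)
          exact hd.congr_of_eventuallyEq he.symm
        have h3 := h1.unique h2
        rw [Pk1 t ht, Qk t ht] at h3
        have huk : u ((k : ℤ) + 1) t ≠ 0 := hne ((k : ℤ) + 1) (by omega) (by omega) t ht
        have h4 := mul_left_cancel₀ huk h3
        have e2 : (-2 - (k : ℤ)) - 1 = -3 - k := by ring
        rw [e2] at h4
        have e3 : -2 - (((k : ℕ) + 1 : ℕ) : ℤ) = -3 - (k : ℤ) := by push_cast; ring
        rw [e3]
        push_cast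
        linarith
  intro t ht
  have hk := (key (N - 1) (by omega)).1 t ht
  have e : (((N - 1 : ℕ)) : ℤ) = (N : ℤ) - 1 := by omega
  rw [e] at hk
  have e2 : -(N : ℤ) = -1 - ((N : ℤ) - 1) := by ring
  rw [e2, hk]
  exact huN t ht
end

section
/- Let a_1, …, a_N : I → ℝ be twice differentiable functions on an interval I whose values are pairwise distinct at every t ∈ I, with a_k'(t) ≠ 0 for all k and t. Set c_0(t) = −Σ_{k=1}^N a_k'(t) and F(z,t) = −Σ_{k=1}^N a_k'(t)/(z − a_k(t)). Then F satisfies the Riccati equation ∂_t F(z,t) = −c_0(t) + zF(z,t) − F(z,t)² for every t ∈ I and every real z ∉ {a_1(t), …, a_N(t)} if and only if the poles satisfy the system a_k'' = a_k a_k' + 2 Σ_{m ≠ k} a_k' a_m'/(a_k − a_m) for all k = 1, …, N on I. -/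
/-!
Since `∂ₜ(aₖ'/(z - aₖ)) = aₖ''/(z - aₖ) + aₖ'²/(z - aₖ)²`, and since
`zF = c₀ - ∑ₖ aₖaₖ'/(z - aₖ)` while the partial fraction decomposition
`1/((z - aₖ)(z - aₘ)) = (1/(z - aₖ) - 1/(z - aₘ))/(aₖ - aₘ)` turns `F²` into
`∑ₖ aₖ'²/(z - aₖ)² + 2 ∑ₖ (∑_{m≠k} aₖ'aₘ'/(aₖ - aₘ))/(z - aₖ)`, the double poles cancel and
the Riccati defect `∂ₜF + c₀ - zF + F²` is the simple-pole sum `-∑ₖ rₖ/(z - aₖ)`, where `rₖ`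
is the defect of the `k`-th pole equation. A sum of simple fractions with distinct poles
vanishes identically only if all its residues vanish: clearing denominators gives a
polynomial of degree `< N` with infinitely many roots, whose value at `aₖ` is
`rₖ ∏_{m≠k} (aₖ - aₘ)`.
-/

open Finset Polynomial Function

section PartialFractions

variable {ι K : Type*} [Fintype ι] [Field K] {A : ι → K} {z : K}

theorem prod_sub_mul_sum_div_sub [DecidableEq ι] (hz : ∀ k, z ≠ A k) (c : ι → K) :
    (∏ m, (z - A m)) * ∑ k, c k / (z - A k) = ∑ k, c k * ∏ m ∈ univ.erase k, (z - A m) := by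
  rw [mul_sum]
  refine sum_congr rfl fun k _ => ?_
  rw [← mul_prod_erase univ (fun m => z - A m) (mem_univ k)]
  field_simp [sub_ne_zero.2 (hz k)]

theorem sum_div_sub_eq_zero_iff [DecidableEq ι] [Infinite K] (hA : Injective A) (c : ι → K) :
    (∀ z, (∀ k, z ≠ A k) → ∑ k, c k / (z - A k) = 0) ↔ ∀ k, c k = 0 := by
  refine ⟨fun h k => ?_, fun h z _ => by simp [h]⟩
  set P : K[X] := ∑ j, C (c j) * ∏ m ∈ univ.erase j, (X - C (A m))
  have hP : P = 0 := by
    refine P.eq_zero_of_infinite_isRoot ((Set.finite_range A).infinite_compl.mono ?_)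
    intro z hz
    have hz : ∀ k, z ≠ A k := fun k hk => hz ⟨k, hk.symm⟩
    simp [P, eval_finsetSum, eval_prod, ← prod_sub_mul_sum_div_sub hz, h z hz]
  have hPk : P.eval (A k) = c k * ∏ m ∈ univ.erase k, (A k - A m) := by
    simp only [P, eval_finsetSum, eval_mul, eval_C, eval_prod, eval_sub, eval_X]
    refine sum_eq_single k (fun j _ hjk => ?_) (by simp)
    rw [prod_eq_zero (mem_erase.2 ⟨Ne.symm hjk, mem_univ k⟩) (sub_self _), mul_zero]
  have hprod : ∏ m ∈ univ.erase k, (A k - A m) ≠ 0 :=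
    prod_ne_zero_iff.2 fun m hm => sub_ne_zero.2 (hA.ne (mem_erase.1 hm).1.symm)
  simpa [hP, hprod] using hPk.symm

theorem mul_sum_div_sub (hz : ∀ k, z ≠ A k) (d : ι → K) :
    z * ∑ k, d k / (z - A k) = ∑ k, d k + ∑ k, A k * d k / (z - A k) := by
  rw [mul_sum, ← sum_add_distrib]
  refine sum_congr rfl fun k _ => ?_
  field_simp [sub_ne_zero.2 (hz k)]
  ring

theorem sum_sum_erase_comm {M : Type*} [AddCommMonoid M] [DecidableEq ι] (f : ι → ι → M) :
    ∑ k, ∑ m ∈ univ.erase k, f m k = ∑ k, ∑ m ∈ univ.erase k, f k m :=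
  sum_comm' fun k m => by simp [ne_comm]

theorem sq_sum_div_sub [DecidableEq ι] (hA : Injective A) (hz : ∀ k, z ≠ A k) (d : ι → K) :
    (∑ k, d k / (z - A k)) ^ 2 = ∑ k, d k ^ 2 / (z - A k) ^ 2
      + 2 * ∑ k, (∑ m ∈ univ.erase k, d k * d m / (A k - A m)) / (z - A k) := by
  set f : ι → ι → K := fun k m => d k * d m / (A k - A m) / (z - A k)
  have hsplit : ∀ k, ∀ m ∈ univ.erase k,
      d k / (z - A k) * (d m / (z - A m)) = f k m + f m k := by
    intro k m hm
    have hkm : A k - A m ≠ 0 := sub_ne_zero.2 (hA.ne (mem_erase.1 hm).1.symm)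
    have hmk : A m - A k ≠ 0 := sub_ne_zero.2 (hA.ne (mem_erase.1 hm).1)
    simp only [f]
    field_simp [sub_ne_zero.2 (hz k), sub_ne_zero.2 (hz m)]
    ring
  calc (∑ k, d k / (z - A k)) ^ 2
      = ∑ k, (d k ^ 2 / (z - A k) ^ 2
          + ∑ m ∈ univ.erase k, d k / (z - A k) * (d m / (z - A m))) := by
        rw [sq, sum_mul_sum]
        refine sum_congr rfl fun k _ => ?_
        rw [← add_sum_erase _ _ (mem_univ k), ← div_pow, sq]
    _ = ∑ k, d k ^ 2 / (z - A k) ^ 2 + 2 * ∑ k, ∑ m ∈ univ.erase k, f k m := by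
        simp only [sum_add_distrib, sum_congr rfl (hsplit _),
          sum_sum_erase_comm (fun k m => f m k)]
        ring
    _ = _ := by simp only [f, sum_div]

theorem riccati_defect_eq_sum_div_sub [DecidableEq ι] (hA : Injective A) (hz : ∀ k, z ≠ A k)
    (d dd : ι → K) :
    -∑ k, (dd k / (z - A k) + d k * d k / (z - A k) ^ 2)
        - (-(-∑ k, d k) + z * (-∑ k, d k / (z - A k)) - (-∑ k, d k / (z - A k)) ^ 2)
      = -∑ k, (dd k - (A k * d k + 2 * ∑ m ∈ univ.erase k, d k * d m / (A k - A m)))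
          / (z - A k) := by
  rw [mul_neg, mul_sum_div_sub hz, neg_sq, sq_sum_div_sub hA hz]
  simp only [sum_add_distrib, sub_div, add_div, sum_sub_distrib, ← sq, mul_div_assoc, ← mul_sum]
  ring

end PartialFractions

theorem hasDerivAt_sum_div_sub {ι 𝕜 : Type*} [Fintype ι] [NontriviallyNormedField 𝕜]
    {a b : ι → 𝕜 → 𝕜} {a' b' : ι → 𝕜} {z t : 𝕜} (ha : ∀ k, HasDerivAt (a k) (a' k) t)
    (hb : ∀ k, HasDerivAt (b k) (b' k) t) (hz : ∀ k, z ≠ a k t) :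
    HasDerivAt (fun s => ∑ k, b k s / (z - a k s))
      (∑ k, (b' k / (z - a k t) + b k t * a' k / (z - a k t) ^ 2)) t := by
  refine HasDerivAt.fun_sum fun k _ => ?_
  refine ((hb k).fun_div ((ha k).const_sub z) (sub_ne_zero.2 (hz k))).congr_deriv ?_
  field_simp [sub_ne_zero.2 (hz k)]
  ring

theorem riccati_iff_pole_system_at {ι 𝕜 : Type*} [Fintype ι] [DecidableEq ι]
    [NontriviallyNormedField 𝕜] {a : ι → 𝕜 → 𝕜} {t : 𝕜}
    (ha : ∀ k, DifferentiableAt 𝕜 (a k) t) (ha' : ∀ k, DifferentiableAt 𝕜 (deriv (a k)) t)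
    (hinj : Injective (a · t)) :
    (∀ z, (∀ k, z ≠ a k t) →
      deriv (fun s => -∑ k, deriv (a k) s / (z - a k s)) t
        = -(-∑ k, deriv (a k) t) + z * (-∑ k, deriv (a k) t / (z - a k t))
            - (-∑ k, deriv (a k) t / (z - a k t)) ^ 2) ↔
      ∀ k, deriv (deriv (a k)) t = a k t * deriv (a k) t
        + 2 * ∑ m ∈ univ.erase k, deriv (a k) t * deriv (a m) t / (a k t - a m t) := by
  refine (forall₂_congr fun z hz => ?_).trans
    ((sum_div_sub_eq_zero_iff hinj _).trans (forall_congr' fun k => sub_eq_zero))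
  have hF := (hasDerivAt_sum_div_sub (fun k => (ha k).hasDerivAt)
    (fun k => (ha' k).hasDerivAt) hz).fun_neg
  rw [hF.deriv, ← sub_eq_zero, riccati_defect_eq_sum_div_sub hinj hz, neg_eq_zero]

open Finset in
theorem rational_riccati_iff_pole_system_general
    (I : Set ℝ)
    (N : ℕ) (a : Fin N → ℝ → ℝ)
    (had : ∀ k, ∀ t ∈ I, DifferentiableAt ℝ (a k) t)
    (had2 : ∀ k, ∀ t ∈ I, DifferentiableAt ℝ (deriv (a k)) t)
    (hdist : ∀ t ∈ I, ∀ k m : Fin N, k ≠ m → a k t ≠ a m t) :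
    (∀ t ∈ I, ∀ z : ℝ, (∀ k, z ≠ a k t) →
      deriv (fun s => -∑ k, deriv (a k) s / (z - a k s)) t
        = -(-∑ k, deriv (a k) t)
            + z * (-∑ k, deriv (a k) t / (z - a k t))
            - (-∑ k, deriv (a k) t / (z - a k t)) ^ 2) ↔
    (∀ k, ∀ t ∈ I,
      deriv (deriv (a k)) t
        = a k t * deriv (a k) t
            + 2 * ∑ m ∈ Finset.univ.erase k,
                deriv (a k) t * deriv (a m) t / (a k t - a m t)) := by
  have hpointwise := fun t (ht : t ∈ I) => riccati_iff_pole_system_at (fun k => had k t ht)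
    (fun k => had2 k t ht) fun k m h => not_imp_not.1 (hdist t ht k m) h
  exact ⟨fun h k t ht => (hpointwise t ht).1 (h t ht) k,
    fun h t ht => (hpointwise t ht).2 fun k => h k t ht⟩

open Finset in
/-- The rational Stieltjes function `F(z,t) = -∑ₖ aₖ'(t)/(z - aₖ(t))`
(with `c₀ = -∑ₖ aₖ'`) satisfies the Riccati equation `∂ₜF = -c₀ + zF - F²` away
from the poles iff the poles satisfy
`aₖ'' = aₖ aₖ' + 2 ∑_{m≠k} aₖ'aₘ'/(aₖ - aₘ)`. -/
theorem rational_riccati_iff_pole_system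
    (I : Set ℝ) (hIopen : IsOpen I) (hIconn : I.OrdConnected)
    (N : ℕ) (a : Fin N → ℝ → ℝ)
    (had : ∀ k, ∀ t ∈ I, DifferentiableAt ℝ (a k) t)
    (had2 : ∀ k, ∀ t ∈ I, DifferentiableAt ℝ (deriv (a k)) t)
    (hane : ∀ k, ∀ t ∈ I, deriv (a k) t ≠ 0)
    (hdist : ∀ t ∈ I, ∀ k m : Fin N, k ≠ m → a k t ≠ a m t) :
    (∀ t ∈ I, ∀ z : ℝ, (∀ k, z ≠ a k t) →
      deriv (fun s => -∑ k, deriv (a k) s / (z - a k s)) t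
        = -(-∑ k, deriv (a k) t)
            + z * (-∑ k, deriv (a k) t / (z - a k t))
            - (-∑ k, deriv (a k) t / (z - a k t)) ^ 2) ↔
    (∀ k, ∀ t ∈ I,
      deriv (deriv (a k)) t
        = a k t * deriv (a k) t
            + 2 * ∑ m ∈ Finset.univ.erase k,
                deriv (a k) t * deriv (a m) t / (a k t - a m t)) :=
  rational_riccati_iff_pole_system_general I N a had had2 hdist
end

section
/- Let a_1, …, a_N : I → ℝ be twice differentiable functions on an interval I whose values are pairwise distinct at every t ∈ I and which satisfy the system a_k'' = a_k a_k' + 2 Σ_{m ≠ k} a_k' a_m'/(a_k − a_m) for all k = 1, …, N. Put u_0(t) = −Σ_{k=1}^N a_k'(t). Then for every real z, the function ψ(t) = e^{−zt/2} ∏_{k=1}^N (z − a_k(t)) satisfies the Schrödinger equation ψ'' + (u_0(t) − z²/4) ψ = 0 on I. -/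
/-!
Write `ψ = e^{-zt/2} P` with `P(t) = ∏ₖ (z - aₖ(t))`; then `ψ'' + (u₀ - z²/4) ψ = 0` becomes
`P'' - z P' + u₀ P = 0`. Expanding `P'` and `P''` by the product rule and substituting the pole
system, the terms with one factor omitted cancel, and what remains is a sum over ordered pairs
`k ≠ m` of `aₖ' aₘ' ∏_{j ≠ k, m} (z - aⱼ) (1 - 2 (z - aₘ)/(aₖ - aₘ))`. It vanishes because the
summand is antisymmetric in `(k, m)`: `(z - aₘ)/(aₖ - aₘ) + (z - aₖ)/(aₘ - aₖ) = 1`.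
-/

open Finset Filter Topology

theorem sum_sum_erase_eq_zero_of_antisymm {ι M : Type*} [DecidableEq ι] [AddCommMonoid M]
    (s : Finset ι) (f : ι → ι → M) (hf : ∀ k ∈ s, ∀ m ∈ s, k ≠ m → f k m + f m k = 0) :
    ∑ k ∈ s, ∑ m ∈ s.erase k, f k m = 0 := by
  rw [← sum_finset_product' s.offDiag s (fun k => s.erase k) (by grind)]
  refine sum_involution (fun p _ => p.swap) (fun p hp => ?_) (fun p hp _ => ?_)
    (fun p hp => by grind) (fun p _ => p.swap_swap)
  · obtain ⟨hk, hm, hkm⟩ := mem_offDiag.mp hp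
    exact hf _ hk _ hm hkm
  · obtain ⟨-, -, hkm⟩ := mem_offDiag.mp hp
    exact fun h => hkm (Prod.ext_iff.mp h).2

section PoleSystem

variable {ι K : Type*} [DecidableEq ι] [Field K]

theorem sum_mul_sum_prod_erase_erase (s : Finset ι) {A : ι → K} (B : ι → K)
    (hA : Set.InjOn A s) (z : K) :
    ∑ k ∈ s, B k * ∑ m ∈ s.erase k, B m * ∏ j ∈ (s.erase k).erase m, (z - A j)
      = ∑ k ∈ s, 2 * (∑ m ∈ s.erase k, B k * B m / (A k - A m))
          * ∏ m ∈ s.erase k, (z - A m) := by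
  rw [← sub_eq_zero, ← sum_sub_distrib]
  set f : ι → ι → K := fun k m =>
    B k * B m * (1 - 2 * (z - A m) / (A k - A m)) * ∏ j ∈ (s.erase k).erase m, (z - A j)
  have hsplit : ∀ k ∈ s, B k * ∑ m ∈ s.erase k, B m * ∏ j ∈ (s.erase k).erase m, (z - A j)
      - 2 * (∑ m ∈ s.erase k, B k * B m / (A k - A m)) * ∏ m ∈ s.erase k, (z - A m)
      = ∑ m ∈ s.erase k, f k m := fun k _ => by
    rw [mul_sum, mul_sum, sum_mul, ← sum_sub_distrib]
    refine sum_congr rfl fun m hm => ?_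
    rw [← mul_prod_erase _ _ hm]
    ring
  rw [sum_congr rfl hsplit]
  refine sum_sum_erase_eq_zero_of_antisymm s f fun k hk m hm hkm => ?_
  have hAkm : A k - A m ≠ 0 := sub_ne_zero.mpr fun h => hkm (hA hk hm h)
  have hAmk : A m - A k ≠ 0 := sub_ne_zero.mpr fun h => hkm (hA hm hk h).symm
  simp only [f, erase_right_comm (s := s) (a := k) (b := m)]
  field_simp
  ring

variable [Fintype ι]

/-- `A`, `B`, `C` stand for the positions `aₖ(t)`, velocities `aₖ'(t)` and accelerations
`aₖ''(t)` of the poles at one instant `t`. -/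
def IsPoleSystem (A B C : ι → K) : Prop :=
  ∀ k, C k = A k * B k + 2 * ∑ m ∈ univ.erase k, B k * B m / (A k - A m)

/-- The left side is `P'' - z P' + u₀ P` for `P = ∏ₖ (z - aₖ)`, with `P'` and `P''` expanded
by the product rule. -/
theorem IsPoleSystem.schrodinger_prod_sub {A B C : ι → K} (h : IsPoleSystem A B C)
    (hA : Function.Injective A) (z : K) :
    -∑ k, (C k * ∏ m ∈ univ.erase k, (z - A m)
        + B k * -∑ m ∈ univ.erase k, B m * ∏ j ∈ (univ.erase k).erase m, (z - A j))
      - z * -∑ k, B k * ∏ m ∈ univ.erase k, (z - A m)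
      + (-∑ k, B k) * ∏ k, (z - A k) = 0 := by
  have hdrift : z * ∑ k, B k * ∏ m ∈ univ.erase k, (z - A m) - (∑ k, B k) * ∏ k, (z - A k)
      = ∑ k, A k * B k * ∏ m ∈ univ.erase k, (z - A m) := by
    rw [mul_sum, sum_mul, ← sum_sub_distrib]
    refine sum_congr rfl fun k _ => ?_
    rw [← mul_prod_erase _ _ (mem_univ k)]
    ring
  have hpairs := sum_mul_sum_prod_erase_erase univ B hA.injOn z
  have hacc : ∑ k, C k * ∏ m ∈ univ.erase k, (z - A m)
      = ∑ k, A k * B k * ∏ m ∈ univ.erase k, (z - A m)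
        + ∑ k, 2 * (∑ m ∈ univ.erase k, B k * B m / (A k - A m))
            * ∏ m ∈ univ.erase k, (z - A m) := by
    rw [← sum_add_distrib]
    exact sum_congr rfl fun k _ => by rw [h k]; ring
  simp only [mul_neg, sum_add_distrib, sum_neg_distrib]
  linear_combination hdrift + hpairs - hacc

end PoleSystem

theorem hasDerivAt_prod_const_sub {ι 𝕜 : Type*} [DecidableEq ι] [NontriviallyNormedField 𝕜]
    (s : Finset ι) {a : ι → 𝕜 → 𝕜} {a' : ι → 𝕜} {z t : 𝕜}
    (ha : ∀ k ∈ s, HasDerivAt (a k) (a' k) t) :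
    HasDerivAt (fun u => ∏ k ∈ s, (z - a k u))
      (-∑ k ∈ s, a' k * ∏ m ∈ s.erase k, (z - a m t)) t := by
  refine (HasDerivAt.fun_finsetProd fun k hk => (ha k hk).const_sub z).congr_deriv ?_
  simp only [smul_eq_mul, ← sum_neg_distrib]
  exact sum_congr rfl fun k _ => by ring

theorem hasDerivAt_deriv_exp_mul {P P' : ℝ → ℝ} {P'' c t : ℝ}
    (hP : ∀ᶠ s in 𝓝 t, HasDerivAt P (P' s) s) (hP' : HasDerivAt P' P'' t) :
    HasDerivAt (deriv fun s => Real.exp (c * s) * P s)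
      (Real.exp (c * t) * (P'' + 2 * c * P' t + c ^ 2 * P t)) t := by
  have hexp : ∀ s, HasDerivAt (fun s => Real.exp (c * s)) (Real.exp (c * s) * c) s := fun s => by
    simpa using ((hasDerivAt_id s).const_mul c).exp
  have hderiv : (deriv fun s => Real.exp (c * s) * P s)
      =ᶠ[𝓝 t] fun s => Real.exp (c * s) * c * P s + Real.exp (c * s) * P' s :=
    hP.mono fun s hs => ((hexp s).mul hs).deriv
  refine (((hexp t).mul_const c |>.mul hP.self_of_nhds).add
    ((hexp t).mul hP')).congr_of_eventuallyEq hderiv |>.congr_deriv ?_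
  ring

open Finset in
theorem pole_system_gives_schrodinger_general
    (I : Set ℝ) (hIopen : IsOpen I)
    (N : ℕ) (a : Fin N → ℝ → ℝ)
    (had : ∀ k, ∀ t ∈ I, DifferentiableAt ℝ (a k) t)
    (had2 : ∀ k, ∀ t ∈ I, DifferentiableAt ℝ (deriv (a k)) t)
    (hdist : ∀ t ∈ I, ∀ k m : Fin N, k ≠ m → a k t ≠ a m t)
    (hsys : ∀ k, ∀ t ∈ I,
      deriv (deriv (a k)) t
        = a k t * deriv (a k) t
            + 2 * ∑ m ∈ Finset.univ.erase k,
                deriv (a k) t * deriv (a m) t / (a k t - a m t)) :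
    ∀ z : ℝ, ∀ t ∈ I,
      deriv (deriv (fun s => Real.exp (-(z * s) / 2) * ∏ k, (z - a k s))) t
        + ((-∑ k, deriv (a k) t) - z ^ 2 / 4)
            * (Real.exp (-(z * t) / 2) * ∏ k, (z - a k t)) = 0 := by
  intro z t ht
  have hP : ∀ᶠ s in 𝓝 t, HasDerivAt (fun u => ∏ k, (z - a k u))
      (-∑ k, deriv (a k) s * ∏ m ∈ univ.erase k, (z - a m s)) s :=
    eventually_of_mem (hIopen.mem_nhds ht) fun s hs =>
      hasDerivAt_prod_const_sub _ fun k _ => (had k s hs).hasDerivAt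
  have hP' : HasDerivAt (fun s => -∑ k, deriv (a k) s * ∏ m ∈ univ.erase k, (z - a m s))
      (-∑ k, (deriv (deriv (a k)) t * ∏ m ∈ univ.erase k, (z - a m t)
        + deriv (a k) t
          * -∑ m ∈ univ.erase k, deriv (a m) t * ∏ j ∈ (univ.erase k).erase m, (z - a j t))) t :=
    (HasDerivAt.fun_sum fun k _ => (had2 k t ht).hasDerivAt.mul
      (hasDerivAt_prod_const_sub _ fun m _ => (had m t ht).hasDerivAt)).neg
  have hpoly := IsPoleSystem.schrodinger_prod_sub (fun k => hsys k t ht)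
    (fun k m hkm => by_contra fun hne => hdist t ht k m hne hkm) z
  have hexp : (fun s => Real.exp (-(z * s) / 2) * ∏ k, (z - a k s))
      = fun s => Real.exp (-z / 2 * s) * ∏ k, (z - a k s) := by
    funext s; ring_nf
  rw [hexp, (hasDerivAt_deriv_exp_mul hP hP').deriv, show -z / 2 * t = -(z * t) / 2 by ring]
  linear_combination Real.exp (-(z * t) / 2) * hpoly

open Finset in
/-- If the poles `aₖ` satisfy the system
`aₖ'' = aₖ aₖ' + 2 ∑_{m≠k} aₖ'aₘ'/(aₖ - aₘ)` and `u₀ = -∑ₖ aₖ'`, then for every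
real `z` the function `ψ(t) = e^{-zt/2} ∏ₖ (z - aₖ(t))` satisfies the
Schrödinger equation `ψ'' + (u₀ - z²/4) ψ = 0` on `I`. -/
theorem pole_system_gives_schrodinger
    (I : Set ℝ) (hIopen : IsOpen I) (hIconn : I.OrdConnected)
    (N : ℕ) (a : Fin N → ℝ → ℝ)
    (had : ∀ k, ∀ t ∈ I, DifferentiableAt ℝ (a k) t)
    (had2 : ∀ k, ∀ t ∈ I, DifferentiableAt ℝ (deriv (a k)) t)
    (hdist : ∀ t ∈ I, ∀ k m : Fin N, k ≠ m → a k t ≠ a m t)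
    (hsys : ∀ k, ∀ t ∈ I,
      deriv (deriv (a k)) t
        = a k t * deriv (a k) t
            + 2 * ∑ m ∈ Finset.univ.erase k,
                deriv (a k) t * deriv (a m) t / (a k t - a m t)) :
    ∀ z : ℝ, ∀ t ∈ I,
      deriv (deriv (fun s => Real.exp (-(z * s) / 2) * ∏ k, (z - a k s))) t
        + ((-∑ k, deriv (a k) t) - z ^ 2 / 4)
            * (Real.exp (-(z * t) / 2) * ∏ k, (z - a k t)) = 0 :=
  pole_system_gives_schrodinger_general I hIopen N a had had2 hdist hsys
end

section
/- Let b_0, …, b_{N−1} and u_0, u_1, …, u_{N−1} be differentiable real functions on an interval I, and set u_N ≡ 0. Let J(t) be the N×N tridiagonal matrix with diagonal entries J_{kk} = b_k, superdiagonal entries J_{k,k+1} = 1, and subdiagonal entries J_{k,k−1} = u_k; let A(t) be its strictly lower-triangular part (A_{k,k−1} = u_k, all other entries 0); and let M be the N×N matrix whose only nonzero entry is M_{00} = 1. Then the functions satisfy the Toda equations b_k' = u_{k+1} − u_k (k = 0, …, N−1) and u_k' = u_k(b_k − b_{k−1}) (k = 1, …, N−1) on I if and only if J'(t) = [J(t),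 A(t)] − u_0(t) M on I, where [J,A] = JA − AJ. -/
lemma sum_ite_mul_right' {N : ℕ} (f g : Fin N → ℝ) (m : ℕ) :
    (∑ k : Fin N, f k * (if (k : ℕ) = m then g k else 0)) =
      if h : m < N then f ⟨m, h⟩ * g ⟨m, h⟩ else 0 := by
  split
  case isTrue h =>
    rw [Finset.sum_eq_single (⟨m, h⟩ : Fin N)]
    · simp
    · intro k _ hk
      rw [if_neg, mul_zero]
      exact fun hkm => hk (Fin.ext hkm)
    · simp
  case isFalse h =>
    apply Finset.sum_eq_zero; intro k _
    rw [if_neg, mul_zero]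
    intro hkm; exact h (hkm ▸ k.isLt)

lemma sum_ite_mul_left' {N : ℕ} (f g : Fin N → ℝ) (m : ℕ) :
    (∑ k : Fin N, (if (k : ℕ) = m then g k else 0) * f k) =
      if h : m < N then g ⟨m, h⟩ * f ⟨m, h⟩ else 0 := by
  have h1 : (∑ k : Fin N, (if (k : ℕ) = m then g k else 0) * f k)
      = ∑ k : Fin N, f k * (if (k : ℕ) = m then g k else 0) := by
    congr 1; funext k; split <;> ring
  rw [h1, sum_ite_mul_right']
  split <;> ring




/-- With `J` the tridiagonal matrix of the recurrence coefficients,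
`A` its strictly lower-triangular part, `M` the matrix with single nonzero entry
`M₀₀ = 1`, and `u_N ≡ 0`, the Toda chain equations hold on `I` iff
`J' = [J,A] - u₀ M` on `I` (entrywise derivatives). -/
theorem toda_iff_perturbed_lax
    (I : Set ℝ) (hIopen : IsOpen I) (hIconn : I.OrdConnected)
    (N : ℕ) (hN : 0 < N) (b u : ℕ → ℝ → ℝ)
    (hbd : ∀ k, k < N → ∀ t ∈ I, DifferentiableAt ℝ (b k) t)
    (hud : ∀ k, k < N → ∀ t ∈ I, DifferentiableAt ℝ (u k) t)
    (huN : ∀ t, u N t = 0)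
    (J A : ℝ → Matrix (Fin N) (Fin N) ℝ) (M : Matrix (Fin N) (Fin N) ℝ)
    (hJ : ∀ t, J t = Matrix.of fun i j : Fin N =>
      if (i : ℕ) = (j : ℕ) then b (i : ℕ) t
      else if (j : ℕ) = (i : ℕ) + 1 then 1
      else if (i : ℕ) = (j : ℕ) + 1 then u (i : ℕ) t
      else 0)
    (hA : ∀ t, A t = Matrix.of fun i j : Fin N =>
      if (i : ℕ) = (j : ℕ) + 1 then u (i : ℕ) t else 0)
    (hM : M = Matrix.of fun i j : Fin N =>
      if (i : ℕ) = 0 ∧ (j : ℕ) = 0 then 1 else 0) :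
    ((∀ k, k < N → ∀ t ∈ I, HasDerivAt (b k) (u (k + 1) t - u k t) t) ∧
      (∀ k, 1 ≤ k → k < N → ∀ t ∈ I,
        HasDerivAt (u k) (u k t * (b k t - b (k - 1) t)) t)) ↔
    (∀ t ∈ I, ∀ i j : Fin N,
      HasDerivAt (fun s => J s i j)
        ((J t * A t - A t * J t - u 0 t • M) i j) t) := by
  have key : ∀ t : ℝ, ∀ i j : Fin N, (J t * A t - A t * J t - u 0 t • M) i j =
      (if (i:ℕ) = (j:ℕ) then u ((i:ℕ)+1) t - u (i:ℕ) t
       else if (i:ℕ) = (j:ℕ)+1 then u (i:ℕ) t * (b (i:ℕ) t - b ((i:ℕ)-1) t)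
       else 0) := by
    rintro t ⟨m, hm⟩ ⟨n, hn⟩
    simp only [Matrix.sub_apply, Matrix.smul_apply, Matrix.mul_apply, hJ, hA, hM,
      Matrix.of_apply, smul_eq_mul, Fin.val_mk]
    rw [sum_ite_mul_right']
    by_cases hi : 1 ≤ m
    · have hc : ∀ x : Fin N,
          (if m = (x:ℕ)+1 then u m t else 0) = (if (x:ℕ) = m-1 then u m t else 0) :=
        fun x => if_congr (by omega) rfl rfl
      rw [Finset.sum_congr rfl (fun x _ => by rw [hc x])]
      rw [sum_ite_mul_left', dif_pos (show m-1 < N by omega)]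
      simp only [Fin.val_mk]
      rw [if_neg (show ¬(m = 0 ∧ n = 0) by omega), mul_zero]
      rcases eq_or_ne m n with rfl | hmn
      · -- diagonal
        rw [if_pos rfl, if_neg (show ¬(m-1 = m) by omega),
          if_pos (show m = m-1+1 by omega), mul_one]
        by_cases hn1 : m + 1 < N
        · simp only [dif_pos hn1, Fin.val_mk]
          simp only [if_true, eq_self_iff_true, ite_true]
          try rw [if_neg (show ¬(m = m+1) by omega)]
          try simp only [if_true, eq_self_iff_true, ite_true]
          ring
        · rw [dif_neg hn1, show m+1 = N by omega, huN]
          ring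
      · rcases eq_or_ne m (n+1) with rfl | hmn1
        · -- subdiagonal
          rw [if_neg hmn, if_pos rfl]
          rw [dif_pos (show n+1 < N from hm)]
          simp only [Fin.val_mk]
          simp only [if_true, eq_self_iff_true, ite_true]
          rw [if_pos (show n+1-1 = n by omega)]
          ring
        · rw [if_neg hmn, if_neg hmn1]
          rw [if_neg (show ¬(m-1 = n) from by omega),
            if_neg (show ¬(n = m-1+1) from by omega)]
          rcases eq_or_ne m (n+1+1) with rfl | hm2
          · rw [if_pos (show n+1+1-1 = n+1 by omega)]
            rw [dif_pos (show n+1 < N by omega)]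
            simp only [Fin.val_mk]
            simp only [if_true, eq_self_iff_true, ite_true]
            try rw [if_neg (show ¬(n+1+1 = n+1) by omega)]
            try rw [if_neg (show ¬(n+1 = n+1+1+1) by omega)]
            try simp only [if_true, eq_self_iff_true, ite_true]
            rw [show n+1+1-1 = n+1 by omega]
            ring
          · rw [if_neg (show ¬(m-1 = n+1) by omega), mul_zero]
            by_cases hn1 : n + 1 < N
            · simp only [dif_pos hn1, Fin.val_mk]
              rw [if_neg (show ¬(m = n+1) from hmn1),
                if_neg (show ¬(n+1 = m+1) by omega),
                if_neg (show ¬(m = n+1+1) from hm2), zero_mul]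
              ring
            · rw [dif_neg hn1]; ring
    · -- m = 0
      have hm0 : m = 0 := by omega
      subst hm0
      have h0 : (∑ x : Fin N, (if 0 = (x:ℕ)+1 then u 0 t else 0) *
          (if (x:ℕ) = n then b (x:ℕ) t else if n = (x:ℕ)+1 then 1
            else if (x:ℕ) = n+1 then u (x:ℕ) t else 0)) = 0 := by
        apply Finset.sum_eq_zero; intro x _
        rw [if_neg (by omega), zero_mul]
      rw [h0]
      rcases eq_or_ne n 0 with rfl | hn0
      · rw [if_pos rfl, if_pos ⟨rfl, rfl⟩, mul_one]
        by_cases hn1 : 0 + 1 < N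
        · simp only [dif_pos hn1, Fin.val_mk]
          simp only [if_true, eq_self_iff_true, ite_true]
          try rw [if_neg (show ¬(0 = 0+1) by omega)]
          try simp only [if_true, eq_self_iff_true, ite_true]
          ring
        · rw [dif_neg hn1, show (0:ℕ)+1 = N by omega, huN]
          ring
      · rw [if_neg (show ¬(0 = n) by omega), if_neg (show ¬(0 = n+1) by omega),
          if_neg (show ¬(0 = 0 ∧ n = 0) by omega), mul_zero]
        by_cases hn1 : n + 1 < N
        · simp only [dif_pos hn1, Fin.val_mk]
          rw [if_neg (show ¬(0 = n+1) by omega),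
            if_neg (show ¬(n+1 = 0+1) by omega),
            if_neg (show ¬(0 = n+1+1) by omega), zero_mul]
          ring
        · rw [dif_neg hn1]; ring
  constructor
  · rintro ⟨hb, hu⟩ t ht i j
    rw [key]
    rcases eq_or_ne ((i:ℕ)) ((j:ℕ)) with h1 | h1
    · rw [if_pos h1]
      have hf : (fun s => J s i j) = b (i:ℕ) := by
        funext s; rw [hJ, Matrix.of_apply, if_pos h1]
      rw [hf]; exact hb i i.isLt t ht
    · rw [if_neg h1]
      rcases eq_or_ne ((i:ℕ)) ((j:ℕ)+1) with h3 | h3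
      · rw [if_pos h3]
        have hf : (fun s => J s i j) = u (i:ℕ) := by
          funext s; rw [hJ, Matrix.of_apply, if_neg h1, if_neg (by omega), if_pos h3]
        rw [hf]; exact hu i (by omega) i.isLt t ht
      · rw [if_neg h3]
        rcases eq_or_ne ((j:ℕ)) ((i:ℕ)+1) with h2 | h2
        · have hf : (fun s => J s i j) = fun _ => (1:ℝ) := by
            funext s; rw [hJ, Matrix.of_apply, if_neg h1, if_pos h2]
          rw [hf]; exact hasDerivAt_const t 1
        · have hf : (fun s => J s i j) = fun _ => (0:ℝ) := by
            funext s; rw [hJ, Matrix.of_apply, if_neg h1, if_neg h2, if_neg h3]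
          rw [hf]; exact hasDerivAt_const t 0
  · intro H
    constructor
    · intro k hk t ht
      have h := H t ht ⟨k, hk⟩ ⟨k, hk⟩
      rw [key] at h
      simp only [Fin.val_mk, if_pos rfl] at h
      have hfun : (fun s => J s ⟨k, hk⟩ ⟨k, hk⟩) = b k := by
        funext s; rw [hJ]; simp
      rwa [hfun] at h
    · intro k hk1 hk t ht
      have h := H t ht ⟨k, hk⟩ ⟨k - 1, by omega⟩
      rw [key] at h
      simp only [Fin.val_mk] at h
      rw [if_neg (by omega), if_pos (by omega)] at h
      have hfun : (fun s => J s ⟨k, hk⟩ ⟨k - 1, by omega⟩) = u k := by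
        funext s; rw [hJ]; simp only [Matrix.of_apply, Fin.val_mk]
        rw [if_neg (by omega), if_neg (by omega), if_pos (by omega)]
      rwa [hfun] at h
end

section
/- Let N ≥ 1 and let b_n, u_n (n ∈ ℤ) be real numbers satisfying the type B reflection conditions u_n = u_{−1−n} and b_n = −b_{−2−n} for all n ∈ ℤ. Let J be the (2N+1)×(2N+1) tridiagonal matrix with diagonal entries b_{−N−1}, b_{−N}, …, b_{N−1} (in this order), all superdiagonal entries equal to 1, and subdiagonal entries u_{−N}, u_{−N+1}, …, u_{N−1}. Let R be the (2N+1)×(2N+1) exchange matrix (R_{ik} = 1 if i + k = 2N, else 0) and S the diagonal matrix with S_{ii} = (−1)^i. Then S R J R S = −Jᵀ; that is, J is similar to a per-skew symmetric tridiagonal matrix. -/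
open Matrix

private lemma smul_entry {n : ℕ} (M : Matrix (Fin (n + 1)) (Fin (n + 1)) ℝ)
    (i j : Fin (n + 1)) :
    ((Matrix.of fun i j : Fin (n + 1) => if i = j then (-1 : ℝ) ^ (i : ℕ) else 0) * M) i j
      = (-1 : ℝ) ^ (i : ℕ) * M i j := by
  rw [Matrix.mul_apply, Finset.sum_eq_single i]
  · simp
  · intro k _ hk
    simp only [Matrix.of_apply, if_neg (Ne.symm hk), zero_mul]
  · intro h
    exact absurd (Finset.mem_univ i) h

private lemma rmul_entry {n : ℕ} (M : Matrix (Fin (n + 1)) (Fin (n + 1)) ℝ)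
    (i j : Fin (n + 1)) :
    ((Matrix.of fun i j : Fin (n + 1) => if (i : ℕ) + (j : ℕ) = n then (1 : ℝ) else 0) * M) i j
      = M i.rev j := by
  have hrev : (i : ℕ) + (i.rev : ℕ) = n := by
    have := i.isLt
    have := Fin.val_rev i
    omega
  rw [Matrix.mul_apply, Finset.sum_eq_single i.rev]
  · rw [Matrix.of_apply, if_pos hrev, one_mul]
  · intro k _ hk
    have hk' : ¬ ((i : ℕ) + (k : ℕ) = n) := by
      intro h
      exact hk (Fin.ext (by omega))
    rw [Matrix.of_apply, if_neg hk', zero_mul]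
  · intro h
    exact absurd (Finset.mem_univ i.rev) h

private lemma mulrs_entry {n : ℕ} (M : Matrix (Fin (n + 1)) (Fin (n + 1)) ℝ)
    (i j : Fin (n + 1)) :
    (M * ((Matrix.of fun i j : Fin (n + 1) => if (i : ℕ) + (j : ℕ) = n then (1 : ℝ) else 0)
        * (Matrix.of fun i j : Fin (n + 1) => if i = j then (-1 : ℝ) ^ (i : ℕ) else 0))) i j
      = M i j.rev * (-1 : ℝ) ^ (j : ℕ) := by
  have hRS : ∀ a c : Fin (n + 1),
      ((Matrix.of fun i j : Fin (n + 1) => if (i : ℕ) + (j : ℕ) = n then (1 : ℝ) else 0)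
        * (Matrix.of fun i j : Fin (n + 1) => if i = j then (-1 : ℝ) ^ (i : ℕ) else 0)) a c
      = if (a : ℕ) + (c : ℕ) = n then (-1 : ℝ) ^ (c : ℕ) else 0 := by
    intro a c
    rw [Matrix.mul_apply, Finset.sum_eq_single c]
    · by_cases h : (a : ℕ) + (c : ℕ) = n
      · rw [Matrix.of_apply, Matrix.of_apply, if_pos h, if_pos rfl, one_mul, if_pos h]
      · rw [Matrix.of_apply, if_neg h, zero_mul, if_neg h]
    · intro k _ hk
      rw [Matrix.of_apply, Matrix.of_apply, if_neg hk, mul_zero]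
    · intro h
      exact absurd (Finset.mem_univ c) h
  have hrev : (j.rev : ℕ) + (j : ℕ) = n := by
    have := j.isLt
    have := Fin.val_rev j
    omega
  rw [Matrix.mul_apply, Finset.sum_eq_single j.rev]
  · rw [hRS, if_pos hrev]
  · intro k _ hk
    rw [hRS]
    have hk' : ¬ ((k : ℕ) + (j : ℕ) = n) := by
      intro h
      exact hk (Fin.ext (by omega))
    rw [if_neg hk', mul_zero]
  · intro h
    exact absurd (Finset.mem_univ j.rev) h

/-- For type B reflection data (`uₙ = u₋₁₋ₙ`, `bₙ = -b₋₂₋ₙ`), the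
`(2N+1)×(2N+1)` tridiagonal matrix `J` with diagonal `b₋ₙ₋₁,…,b_{N-1}`,
superdiagonal `1` and subdiagonal `u₋ₙ,…,u_{N-1}` satisfies `S R J R S = -Jᵀ`,
where `R` is the exchange matrix and `S = diag((-1)ⁱ)`. -/
theorem typeB_jacobi_per_skew_symmetric
    (N : ℕ) (hN : 1 ≤ N) (b u : ℤ → ℝ)
    (hu : ∀ n : ℤ, u n = u (-1 - n)) (hb : ∀ n : ℤ, b n = -b (-2 - n))
    (J R S : Matrix (Fin (2 * N + 1)) (Fin (2 * N + 1)) ℝ)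
    (hJ : J = Matrix.of fun i j : Fin (2 * N + 1) =>
      if (i : ℕ) = (j : ℕ) then b ((i : ℤ) - N - 1)
      else if (j : ℕ) = (i : ℕ) + 1 then 1
      else if (i : ℕ) = (j : ℕ) + 1 then u ((i : ℤ) - N - 1)
      else 0)
    (hR : R = Matrix.of fun i j : Fin (2 * N + 1) =>
      if (i : ℕ) + (j : ℕ) = 2 * N then 1 else 0)
    (hS : S = Matrix.of fun i j : Fin (2 * N + 1) =>
      if i = j then (-1 : ℝ) ^ (i : ℕ) else 0) :
    S * R * J * R * S = -Jᵀ := by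
  subst hJ hR hS
  rw [mul_assoc, mul_assoc, mul_assoc]
  ext i j
  rw [smul_entry, rmul_entry, mulrs_entry]
  simp only [Matrix.of_apply, Matrix.neg_apply, Matrix.transpose_apply]
  have hi := i.isLt
  have hj := j.isLt
  have hri := Fin.val_rev i
  have hrj := Fin.val_rev j
  have hic : ((i.rev : Fin (2 * N + 1)) : ℤ) = 2 * N - (i : ℤ) := by
    have h0 : ((i.rev : Fin (2 * N + 1)) : ℤ) = ((i.rev : ℕ) : ℤ) := rfl
    rw [h0]
    omega
  rcases Nat.lt_trichotomy (i : ℕ) (j : ℕ) with h | h | h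
  · by_cases h1 : (j : ℕ) = (i : ℕ) + 1
    · -- LHS subdiagonal (rev), RHS superdiagonal of J at (j,i)
      have c1 : ¬ ((i.rev : ℕ) = (j.rev : ℕ)) := by omega
      have c2 : ¬ ((j.rev : ℕ) = (i.rev : ℕ) + 1) := by omega
      have c3 : (i.rev : ℕ) = (j.rev : ℕ) + 1 := by omega
      have c4 : ¬ ((j : ℕ) = (i : ℕ)) := by omega
      have c5 : ¬ ((i : ℕ) = (j : ℕ) + 1) := by omega
      rw [if_neg c1, if_neg c2, if_pos c3, if_neg c4, if_neg c5, if_pos h1, hic]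
      have hu' : u (2 * (N : ℤ) - (i : ℤ) - N - 1) = u ((j : ℤ) - N - 1) := by
        rw [hu ((j : ℤ) - N - 1)]
        congr 1
        omega
      rw [hu']
      have hsign : (-1 : ℝ) ^ (i : ℕ) * (-1 : ℝ) ^ (j : ℕ) = -1 := by
        rw [← pow_add]
        apply Odd.neg_one_pow
        exact ⟨(i : ℕ), by omega⟩
      linear_combination (u ((j : ℤ) - N - 1)) * hsign
    · -- off band: both sides zero
      have c1 : ¬ ((i.rev : ℕ) = (j.rev : ℕ)) := by omega
      have c2 : ¬ ((j.rev : ℕ) = (i.rev : ℕ) + 1) := by omega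
      have c3 : ¬ ((i.rev : ℕ) = (j.rev : ℕ) + 1) := by omega
      have c4 : ¬ ((j : ℕ) = (i : ℕ)) := by omega
      have c5 : ¬ ((i : ℕ) = (j : ℕ) + 1) := by omega
      rw [if_neg c1, if_neg c2, if_neg c3, if_neg c4, if_neg c5, if_neg h1]
      ring
  · -- diagonal
    have c1 : (i.rev : ℕ) = (j.rev : ℕ) := by omega
    have c4 : (j : ℕ) = (i : ℕ) := h.symm
    rw [if_pos c1, if_pos c4, hic]
    have harg : (-2 : ℤ) - (2 * (N : ℤ) - (i : ℤ) - N - 1) = (j : ℤ) - N - 1 := by omega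
    rw [hb (2 * (N : ℤ) - (i : ℤ) - N - 1), harg]
    have hsign : (-1 : ℝ) ^ (i : ℕ) * (-1 : ℝ) ^ (j : ℕ) = 1 := by
      rw [← pow_add]
      apply Even.neg_one_pow
      exact ⟨(i : ℕ), by omega⟩
    linear_combination (-(b ((j : ℤ) - N - 1))) * hsign
  · by_cases h1 : (i : ℕ) = (j : ℕ) + 1
    · -- LHS superdiagonal (rev), RHS subdiagonal of J at (j,i)
      have c1 : ¬ ((i.rev : ℕ) = (j.rev : ℕ)) := by omega
      have c2 : (j.rev : ℕ) = (i.rev : ℕ) + 1 := by omega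
      have c4 : ¬ ((j : ℕ) = (i : ℕ)) := by omega
      rw [if_neg c1, if_pos c2, if_neg c4, if_pos h1]
      have hsign : (-1 : ℝ) ^ (i : ℕ) * (-1 : ℝ) ^ (j : ℕ) = -1 := by
        rw [← pow_add]
        apply Odd.neg_one_pow
        exact ⟨(j : ℕ), by omega⟩
      linear_combination hsign
    · have c1 : ¬ ((i.rev : ℕ) = (j.rev : ℕ)) := by omega
      have c2 : ¬ ((j.rev : ℕ) = (i.rev : ℕ) + 1) := by omega
      have c3 : ¬ ((i.rev : ℕ) = (j.rev : ℕ) + 1) := by omega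
      have c4 : ¬ ((j : ℕ) = (i : ℕ)) := by omega
      have c6 : ¬ ((j : ℕ) = (i : ℕ) + 1) := by omega
      rw [if_neg c1, if_neg c2, if_neg c3, if_neg c4, if_neg h1, if_neg c6]
      ring
end

section
/- Let N ≥ 1 and let b_n, u_n (n ∈ ℤ) be real numbers satisfying the type C reflection conditions u_n = u_{−n} and b_n = −b_{−n−1} for all n ∈ ℤ. Let J be the 2N×2N tridiagonal matrix with diagonal entries b_{−N}, b_{−N+1}, …, b_{N−1} (in this order), all superdiagonal entries equal to 1, and subdiagonal entries u_{−N+1}, u_{−N+2}, …, u_{N−1}. Let R be the 2N×2N exchange matrix (R_{ik} = 1 if i + k = 2N−1, else 0) and S the diagonal matrix with S_{ii} = (−1)^i. Then S R J R S = −Jᵀ; that is, J is similar to a per-skew symmetric tridiagonal matrix. -/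
open Matrix

/-- For type C reflection data (`uₙ = u₋ₙ`, `bₙ = -b₋ₙ₋₁`), the
`2N×2N` tridiagonal matrix `J` with diagonal `b₋ₙ,…,b_{N-1}`, superdiagonal `1`
and subdiagonal `u₋ₙ₊₁,…,u_{N-1}` satisfies `S R J R S = -Jᵀ`, where `R` is the
exchange matrix and `S = diag((-1)ⁱ)`. -/
theorem typeC_jacobi_per_skew_symmetric
    (N : ℕ) (hN : 1 ≤ N) (b u : ℤ → ℝ)
    (hu : ∀ n : ℤ, u n = u (-n)) (hb : ∀ n : ℤ, b n = -b (-n - 1))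
    (J R S : Matrix (Fin (2 * N)) (Fin (2 * N)) ℝ)
    (hJ : J = Matrix.of fun i j : Fin (2 * N) =>
      if (i : ℕ) = (j : ℕ) then b ((i : ℤ) - N)
      else if (j : ℕ) = (i : ℕ) + 1 then 1
      else if (i : ℕ) = (j : ℕ) + 1 then u ((i : ℤ) - N)
      else 0)
    (hR : R = Matrix.of fun i j : Fin (2 * N) =>
      if (i : ℕ) + (j : ℕ) = 2 * N - 1 then 1 else 0)
    (hS : S = Matrix.of fun i j : Fin (2 * N) =>
      if i = j then (-1 : ℝ) ^ (i : ℕ) else 0) :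
    S * R * J * R * S = -Jᵀ := by
  have h2N : 1 ≤ 2 * N := by omega
  -- S is a diagonal matrix
  have hSd : S = Matrix.diagonal (fun i : Fin (2 * N) => (-1 : ℝ) ^ (i : ℕ)) := by
    rw [hS]; ext i j; by_cases h : i = j <;> simp [Matrix.diagonal, h]
  -- left mult by R reverses rows
  have hRA : ∀ (A : Matrix (Fin (2 * N)) (Fin (2 * N)) ℝ) (i j : Fin (2 * N)),
      (R * A) i j = A ⟨2 * N - 1 - (i : ℕ), by omega⟩ j := by
    intro A i j
    have hi := i.isLt
    rw [hR, Matrix.mul_apply]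
    rw [Finset.sum_eq_single (⟨2 * N - 1 - (i : ℕ), by omega⟩ : Fin (2 * N))]
    · simp only [Matrix.of_apply]
      rw [if_pos (by omega)]
      ring
    · intro k _ hk
      have hk' : (i : ℕ) + (k : ℕ) ≠ 2 * N - 1 := by
        intro h
        apply hk
        apply Fin.ext
        have hi := i.isLt
        simp
        omega
      simp [Matrix.of_apply, hk']
    · intro h
      exact absurd (Finset.mem_univ _) h
  -- right mult by R reverses columns
  have hAR : ∀ (A : Matrix (Fin (2 * N)) (Fin (2 * N)) ℝ) (i j : Fin (2 * N)),
      (A * R) i j = A i ⟨2 * N - 1 - (j : ℕ), by omega⟩ := by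
    intro A i j
    have hj := j.isLt
    rw [hR, Matrix.mul_apply]
    rw [Finset.sum_eq_single (⟨2 * N - 1 - (j : ℕ), by omega⟩ : Fin (2 * N))]
    · simp only [Matrix.of_apply]
      rw [if_pos (by omega)]
      ring
    · intro k _ hk
      have hk' : (k : ℕ) + (j : ℕ) ≠ 2 * N - 1 := by
        intro h
        apply hk
        apply Fin.ext
        have hj := j.isLt
        simp
        omega
      simp [Matrix.of_apply, hk']
    · intro h
      exact absurd (Finset.mem_univ _) h
  ext i j
  have hi := i.isLt
  have hj := j.isLt
  have step1 : (S * R * J * R * S) i j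
      = (-1 : ℝ) ^ (i : ℕ) * J ⟨2 * N - 1 - (i : ℕ), by omega⟩
          ⟨2 * N - 1 - (j : ℕ), by omega⟩ * (-1 : ℝ) ^ (j : ℕ) := by
    rw [mul_assoc S R J, mul_assoc S (R * J) R]
    rw [hSd, Matrix.mul_diagonal, Matrix.diagonal_mul, hAR, hRA]
  rw [step1, hJ]
  simp only [Matrix.of_apply, Matrix.neg_apply, Matrix.transpose_apply, Fin.val_mk]
  have hpow : ∀ k : ℕ, ((-1 : ℝ)) ^ k * ((-1 : ℝ)) ^ k = 1 := by
    intro k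
    rw [← pow_add, ← two_mul, pow_mul]
    norm_num
  by_cases h1 : (i : ℕ) = (j : ℕ)
  · have hij : 2 * N - 1 - (i : ℕ) = 2 * N - 1 - (j : ℕ) := by omega
    rw [if_pos hij, if_pos ((Fin.ext h1).symm ▸ rfl : (j : ℕ) = (i : ℕ))]
    have hii : i = j := Fin.ext h1
    subst hii
    have hbv : b (((2 * N - 1 - (i : ℕ) : ℕ) : ℤ) - (N : ℤ)) = -b ((i : ℤ) - N) := by
      rw [hb]
      congr 1
      rw [Nat.cast_sub (by omega : (i : ℕ) ≤ 2 * N - 1), Nat.cast_sub h2N]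
      push_cast
      ring
    rw [hbv]
    rw [mul_comm, ← mul_assoc, hpow]
    ring
  · rw [if_neg (by omega : ¬ (2 * N - 1 - (i : ℕ) = 2 * N - 1 - (j : ℕ))),
        if_neg (by omega : ¬ (j : ℕ) = (i : ℕ))]
    by_cases h2 : (j : ℕ) = (i : ℕ) + 1
    · -- superdiagonal of original at (i,j); reversed gives subdiagonal
      rw [if_neg (by omega : ¬ (2 * N - 1 - (j : ℕ) = 2 * N - 1 - (i : ℕ) + 1)),
          if_pos (by omega : 2 * N - 1 - (i : ℕ) = 2 * N - 1 - (j : ℕ) + 1),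
          if_neg (by omega : ¬ (i : ℕ) = (j : ℕ) + 1), if_pos h2]
    -- value goal: -1 * u(N-1-i) ... handle after
      have huv : u (((2 * N - 1 - (i : ℕ) : ℕ) : ℤ) - (N : ℤ)) = u ((j : ℤ) - N) := by
        rw [hu]
        congr 1
        rw [Nat.cast_sub (by omega : (i : ℕ) ≤ 2 * N - 1), Nat.cast_sub h2N]
        push_cast
        omega
      rw [huv]
      have : ((-1 : ℝ)) ^ (i : ℕ) * ((-1 : ℝ)) ^ (j : ℕ) = -1 := by
        rw [← pow_add]
        have : (i : ℕ) + (j : ℕ) = 2 * (i : ℕ) + 1 := by omega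
        rw [this, pow_succ, pow_mul]
        norm_num
      calc (-1 : ℝ) ^ (i : ℕ) * u ((j : ℤ) - N) * (-1 : ℝ) ^ (j : ℕ)
          = ((-1 : ℝ)) ^ (i : ℕ) * ((-1 : ℝ)) ^ (j : ℕ) * u ((j : ℤ) - N) := by ring
        _ = -u ((j : ℤ) - N) := by rw [this]; ring
    · by_cases h3 : (i : ℕ) = (j : ℕ) + 1
      · rw [if_pos (by omega : 2 * N - 1 - (j : ℕ) = 2 * N - 1 - (i : ℕ) + 1),
            if_pos h3]
        have : ((-1 : ℝ)) ^ (i : ℕ) * ((-1 : ℝ)) ^ (j : ℕ) = -1 := by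
          rw [← pow_add]
          have : (i : ℕ) + (j : ℕ) = 2 * (j : ℕ) + 1 := by omega
          rw [this, pow_succ, pow_mul]
          norm_num
        calc (-1 : ℝ) ^ (i : ℕ) * 1 * (-1 : ℝ) ^ (j : ℕ)
            = ((-1 : ℝ)) ^ (i : ℕ) * ((-1 : ℝ)) ^ (j : ℕ) := by ring
          _ = -1 := this
      · rw [if_neg (by omega : ¬ (2 * N - 1 - (j : ℕ) = 2 * N - 1 - (i : ℕ) + 1)),
            if_neg (by omega : ¬ (2 * N - 1 - (i : ℕ) = 2 * N - 1 - (j : ℕ) + 1)),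
            if_neg h3]
        rw [if_neg (by omega : ¬ (j : ℕ) = (i : ℕ) + 1)]
        ring
end

section
/- Let N be a positive integer and define, for integers n ≥ 0, u_n(t) = (N(N+1) − n(n+1))/cosh²(t) and b_n(t) = −2(n+1)·tanh(t), together with b_{−1}(t) = 0. Then these functions satisfy the Toda chain equations b_n' = u_{n+1} − u_n for n ≥ 0 and u_n' = u_n(b_n − b_{n−1}) for n ≥ 0, for all real t; moreover u_N ≡ 0. -/
open Real

theorem Real.hasDerivAt_tanh (t : ℝ) : HasDerivAt tanh (1 / cosh t ^ 2) t := by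
  have hcosh : cosh t ≠ 0 := (cosh_pos t).ne'
  have hquot := (hasDerivAt_sinh t).div (hasDerivAt_cosh t) hcosh
  rw [show tanh = fun s => sinh s / cosh s from funext tanh_eq_sinh_div_cosh]
  refine hquot.congr_deriv ?_
  rw [← cosh_sq_sub_sinh_sq t]
  ring

theorem Real.hasDerivAt_const_div_cosh_sq (c t : ℝ) :
    HasDerivAt (fun s => c / cosh s ^ 2) (c / cosh t ^ 2 * (-2 * tanh t)) t := by
  have hcosh : cosh t ≠ 0 := (cosh_pos t).ne'
  have hquot := (hasDerivAt_const t c).div ((hasDerivAt_cosh t).pow 2) (pow_ne_zero 2 hcosh)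
  refine hquot.congr_deriv ?_
  rw [tanh_eq_sinh_div_cosh, Pi.pow_apply]
  field_simp
  ring

theorem soliton_toda_solution_general
    (N : ℕ) (u : ℕ → ℝ → ℝ) (b : ℤ → ℝ → ℝ)
    (hu : ∀ n : ℕ, ∀ t : ℝ,
      u n t = ((N : ℝ) * ((N : ℝ) + 1) - (n : ℝ) * ((n : ℝ) + 1)) / Real.cosh t ^ 2)
    (hb : ∀ n : ℤ, 0 ≤ n → ∀ t : ℝ, b n t = -2 * ((n : ℝ) + 1) * Real.tanh t)
    (hbm1 : ∀ t : ℝ, b (-1) t = 0) :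
    (∀ n : ℕ, ∀ t : ℝ, HasDerivAt (b (n : ℤ)) (u (n + 1) t - u n t) t) ∧
    (∀ n : ℕ, ∀ t : ℝ,
      HasDerivAt (u n) (u n t * (b (n : ℤ) t - b ((n : ℤ) - 1) t)) t) ∧
    (∀ t : ℝ, u N t = 0) := by
  refine ⟨fun n t => ?_, fun n t => ?_, fun t => by simp [hu]⟩
  · have hb_nat : b n = fun s => -2 * ((n : ℝ) + 1) * tanh s :=
      funext fun s => by simpa using hb n n.cast_nonneg s
    rw [hb_nat, hu, hu]
    refine ((hasDerivAt_tanh t).const_mul _).congr_deriv ?_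
    push_cast
    ring
  · have hb_step : b n t - b (n - 1) t = -2 * tanh t := by
      cases n with
      | zero => simp [hbm1, hb 0 le_rfl]
      | succ m =>
        rw [hb _ (by positivity), hb _ (by omega)]
        push_cast
        ring
    rw [hb_step, show u n = _ from funext (hu n)]
    exact hasDerivAt_const_div_cosh_sq _ t

/-- The functions `uₙ(t) = (N(N+1) - n(n+1))/cosh²t`,
`bₙ(t) = -2(n+1)tanh t` (for `n ≥ 0`) together with `b₋₁ = 0` satisfy the Toda
chain equations `bₙ' = u_{n+1} - uₙ` and `uₙ' = uₙ(bₙ - b_{n-1})` for all `n ≥ 0`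
and all real `t`; moreover `u_N ≡ 0`. -/
theorem soliton_toda_solution
    (N : ℕ) (hN : 0 < N) (u : ℕ → ℝ → ℝ) (b : ℤ → ℝ → ℝ)
    (hu : ∀ n : ℕ, ∀ t : ℝ,
      u n t = ((N : ℝ) * ((N : ℝ) + 1) - (n : ℝ) * ((n : ℝ) + 1)) / Real.cosh t ^ 2)
    (hb : ∀ n : ℤ, 0 ≤ n → ∀ t : ℝ, b n t = -2 * ((n : ℝ) + 1) * Real.tanh t)
    (hbm1 : ∀ t : ℝ, b (-1) t = 0) :
    (∀ n : ℕ, ∀ t : ℝ, HasDerivAt (b (n : ℤ)) (u (n + 1) t - u n t) t) ∧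
    (∀ n : ℕ, ∀ t : ℝ,
      HasDerivAt (u n) (u n t * (b (n : ℤ) t - b ((n : ℤ) - 1) t)) t) ∧
    (∀ t : ℝ, u N t = 0) :=
  soliton_toda_solution_general N u b hu hb hbm1
end

section
/- Let N be a positive integer and define polynomials P_n(x) by P_0 = 1, P_1 = x, and P_{n+1}(x) = x P_n(x) − (N−n)(N+n+1) P_{n−1}(x) for 1 ≤ n ≤ N−1. Then: if N = 2j is even, P_N(x) = ∏_{k=0}^{j−1} (x² − (4k+2)²); and if N = 2j+1 is odd, P_N(x) = x · ∏_{k=1}^{j} (x² − (4k)²). In particular, the zeros of P_N are ±2, ±6, …, ±(4j−2) when N = 2j, and 0, ±4, ±8, …, ±4j when N = 2j+1. -/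
open Finset

private def hpfCC (ν : ℝ) (n m : ℕ) : ℝ :=
  ((n + m + 1).choose (2 * m + 1) : ℝ) * ∏ i ∈ Finset.Ico m n, ((i : ℝ) + 1 - ν)

private lemma hpfCC_zero (ν : ℝ) {n m : ℕ} (h : n < m) : hpfCC ν n m = 0 := by
  have : n + m + 1 < 2 * m + 1 := by omega
  simp [hpfCC, Nat.choose_eq_zero_of_lt this]

private lemma hpfCC_diag (ν : ℝ) (n : ℕ) : hpfCC ν n n = 1 := by
  simp [hpfCC, show n + n + 1 = 2 * n + 1 by omega]

private lemma hpf_master (ν : ℝ) (n m : ℕ) (hn : 1 ≤ n) :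
    hpfCC ν (n + 1) m =
      (if m = 0 then 0 else hpfCC ν n (m - 1)) + (4 * (m : ℝ) - 2 * ν + 2) * hpfCC ν n m
        - (ν - n) * (ν + n + 1) * hpfCC ν (n - 1) m := by
  rcases Nat.lt_or_ge m (n + 1) with hm | hm
  · rcases Nat.eq_or_lt_of_le (Nat.lt_succ_iff.mp hm) with rfl | hmn
    · -- m = n
      obtain ⟨k, rfl⟩ : ∃ k, m = k + 1 := ⟨m - 1, by omega⟩
      rw [if_neg (by omega), show k + 1 - 1 = k from rfl,
        hpfCC_zero ν (show k < k + 1 by omega)]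
      simp only [hpfCC]
      rw [show k + 1 + 1 + (k + 1) + 1 = 2 * (k + 1) + 2 by omega,
        show k + 1 + (k + 1) + 1 = 2 * (k + 1) + 1 by omega,
        show k + 1 + k + 1 = 2 * k + 2 by omega,
        show 2 * k + 1 = 2 * k + 1 from rfl,
        show (2 * (k + 1) + 2).choose (2 * (k + 1) + 1) = 2 * (k + 1) + 2 by
          rw [show 2 * (k + 1) + 1 = (2 * (k + 1) + 2) - 1 by omega,
            Nat.choose_symm (by omega), Nat.choose_one_right],
        show (2 * k + 2).choose (2 * k + 1) = 2 * k + 2 by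
          rw [show 2 * k + 1 = (2 * k + 2) - 1 by omega,
            Nat.choose_symm (by omega), Nat.choose_one_right],
        Nat.choose_self,
        show k + 1 + 1 = (k + 1) + 1 from rfl,
        Finset.prod_Ico_succ_top (le_refl (k + 1)), Finset.Ico_self,
        Finset.prod_Ico_succ_top (le_refl k), Finset.Ico_self]
      push_cast
      ring
    · -- m < n
      obtain ⟨d, rfl⟩ : ∃ d, n = m + d + 1 := ⟨n - m - 1, by omega⟩
      rcases Nat.eq_zero_or_pos m with rfl | hm1
      · -- m = 0
        rw [if_pos rfl]
        rw [show 0 + d + 1 = d + 1 by omega]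
        simp only [hpfCC]
        rw [show d + 1 + 1 + 0 + 1 = d + 3 by omega,
          show d + 1 + 0 + 1 = d + 2 by omega,
          show d + 1 - 1 = d by omega,
          show d + 0 + 1 = d + 1 by omega,
          show 2 * 0 + 1 = 1 by omega,
          Nat.choose_one_right, Nat.choose_one_right, Nat.choose_one_right,
          show d + 1 + 1 = (d + 1) + 1 from rfl,
          Finset.prod_Ico_succ_top (show 0 ≤ d + 1 by omega),
          Finset.prod_Ico_succ_top (show 0 ≤ d by omega)]
        push_cast
        ring
      · -- m = μ + 1
        obtain ⟨μ, rfl⟩ : ∃ μ, m = μ + 1 := ⟨m - 1, by omega⟩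
        rw [if_neg (by omega)]
        rw [show μ + 1 + d + 1 = μ + d + 2 by omega, show μ + 1 - 1 = μ from rfl]
        simp only [hpfCC]
        rw [show μ + d + 2 + 1 + (μ + 1) + 1 = 2 * μ + d + 5 by omega,
          show μ + d + 2 + (μ + 1) + 1 = 2 * μ + d + 4 by omega,
          show μ + d + 2 - 1 = μ + d + 1 by omega,
          show μ + d + 1 + (μ + 1) + 1 = 2 * μ + d + 3 by omega,
          show μ + d + 2 + μ + 1 = 2 * μ + d + 3 by omega,
          show 2 * (μ + 1) + 1 = 2 * μ + 3 by omega]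
        -- split products
        rw [Finset.prod_eq_prod_Ico_succ_bot (show μ < μ + d + 2 by omega),
          show μ + d + 2 + 1 = (μ + d + 2) + 1 from rfl,
          show μ + d + 2 = (μ + d + 1) + 1 from rfl,
          Finset.prod_Ico_succ_top (show μ + 1 ≤ (μ + d + 1) + 1 by omega),
          Finset.prod_Ico_succ_top (show μ + 1 ≤ μ + d + 1 by omega)]
        -- binomials to factorials
        rw [Nat.cast_choose ℝ (show 2 * μ + 3 ≤ 2 * μ + d + 5 by omega),
          Nat.cast_choose ℝ (show 2 * μ + 3 ≤ 2 * μ + d + 4 by omega),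
          Nat.cast_choose ℝ (show 2 * μ + 3 ≤ 2 * μ + d + 3 by omega),
          Nat.cast_choose ℝ (show 2 * μ + 1 ≤ 2 * μ + d + 3 by omega)]
        rw [show 2 * μ + d + 5 - (2 * μ + 3) = d + 2 by omega,
          show 2 * μ + d + 4 - (2 * μ + 3) = d + 1 by omega,
          show 2 * μ + d + 3 - (2 * μ + 3) = d by omega,
          show 2 * μ + d + 3 - (2 * μ + 1) = d + 2 by omega]
        have e1 : ((Nat.factorial (2 * μ + d + 5)) : ℝ)
            = ((2 * μ + d + 5 : ℕ) : ℝ) * (((2 * μ + d + 4 : ℕ) : ℝ)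
              * ((Nat.factorial (2 * μ + d + 3)) : ℝ)) := by
          rw [show 2 * μ + d + 5 = (2 * μ + d + 4) + 1 by omega]
          rw [Nat.factorial_succ]
          rw [show 2 * μ + d + 4 = (2 * μ + d + 3) + 1 by omega]
          rw [Nat.factorial_succ]
          push_cast; ring
        have e2 : ((Nat.factorial (2 * μ + d + 4)) : ℝ)
            = ((2 * μ + d + 4 : ℕ) : ℝ) * ((Nat.factorial (2 * μ + d + 3)) : ℝ) := by
          rw [show 2 * μ + d + 4 = (2 * μ + d + 3) + 1 by omega, Nat.factorial_succ]
          push_cast; ring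
        have e3 : ((Nat.factorial (2 * μ + 3)) : ℝ)
            = ((2 * μ + 3 : ℕ) : ℝ) * (((2 * μ + 2 : ℕ) : ℝ)
              * ((Nat.factorial (2 * μ + 1)) : ℝ)) := by
          rw [show 2 * μ + 3 = (2 * μ + 2) + 1 by omega, Nat.factorial_succ,
            show 2 * μ + 2 = (2 * μ + 1) + 1 by omega, Nat.factorial_succ]
          push_cast; ring
        have e4 : ((Nat.factorial (d + 2)) : ℝ)
            = ((d + 2 : ℕ) : ℝ) * (((d + 1 : ℕ) : ℝ) * ((Nat.factorial d) : ℝ)) := by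
          rw [show d + 2 = (d + 1) + 1 from rfl, Nat.factorial_succ, Nat.factorial_succ]
          push_cast; ring
        have e5 : ((Nat.factorial (d + 1)) : ℝ)
            = ((d + 1 : ℕ) : ℝ) * ((Nat.factorial d) : ℝ) := by
          rw [Nat.factorial_succ]; push_cast; ring
        rw [e1, e2, e3, e4, e5]
        have hA : ((Nat.factorial (2 * μ + d + 3)) : ℝ) ≠ 0 :=
          Nat.cast_ne_zero.mpr (Nat.factorial_ne_zero _)
        have hK : ((Nat.factorial (2 * μ + 1)) : ℝ) ≠ 0 :=
          Nat.cast_ne_zero.mpr (Nat.factorial_ne_zero _)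
        have hB : ((Nat.factorial d) : ℝ) ≠ 0 :=
          Nat.cast_ne_zero.mpr (Nat.factorial_ne_zero _)
        have h1 : ((2 * μ + d + 5 : ℕ) : ℝ) ≠ 0 := by positivity
        have h2 : ((2 * μ + d + 4 : ℕ) : ℝ) ≠ 0 := by positivity
        have h3 : ((2 * μ + 3 : ℕ) : ℝ) ≠ 0 := by positivity
        have h4 : ((2 * μ + 2 : ℕ) : ℝ) ≠ 0 := by positivity
        have h5 : ((d + 2 : ℕ) : ℝ) ≠ 0 := by positivity
        have h6 : ((d + 1 : ℕ) : ℝ) ≠ 0 := by positivity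
        field_simp
        push_cast
        ring
  · rcases Nat.eq_or_lt_of_le hm with h | hm2
    · -- m = n + 1
      subst h
      rw [if_neg (by omega), hpfCC_diag, show n + 1 - 1 = n from rfl, hpfCC_diag,
        hpfCC_zero ν (Nat.lt_succ_self n), hpfCC_zero ν (show n - 1 < n + 1 by omega)]
      ring
    · -- m ≥ n + 2
      rw [if_neg (by omega), hpfCC_zero ν (show n + 1 < m by omega),
        hpfCC_zero ν (show n < m - 1 by omega), hpfCC_zero ν (show n < m by omega),
        hpfCC_zero ν (show n - 1 < m by omega)]
      ring

private def hpfPhi (ν : ℝ) (m : ℕ) (x : ℝ) : ℝ :=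
  ∏ i ∈ Finset.range m, (x - (4 * (i : ℝ) - 2 * ν + 2))

private def hpfF (ν : ℝ) (n : ℕ) (x : ℝ) : ℝ :=
  ∑ m ∈ Finset.range (n + 1), hpfCC ν n m * hpfPhi ν m x

private lemma hpfPhi_succ (ν : ℝ) (m : ℕ) (x : ℝ) :
    hpfPhi ν (m + 1) x = hpfPhi ν m x * (x - (4 * (m : ℝ) - 2 * ν + 2)) :=
  Finset.prod_range_succ _ m

private lemma hpfF_rec (ν : ℝ) (k : ℕ) (x : ℝ) :
    hpfF ν (k + 2) x = x * hpfF ν (k + 1) x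
      - (ν - ((k : ℝ) + 1)) * (ν + ((k : ℝ) + 1) + 1) * hpfF ν k x := by
  have hm : ∀ m : ℕ, hpfCC ν (k + 2) m
      = (if m = 0 then 0 else hpfCC ν (k + 1) (m - 1))
        + (4 * (m : ℝ) - 2 * ν + 2) * hpfCC ν (k + 1) m
        - (ν - ((k : ℝ) + 1)) * (ν + ((k : ℝ) + 1) + 1) * hpfCC ν k m := by
    intro m
    have h := hpf_master ν (k + 1) m (by omega)
    rw [show k + 1 - 1 = k from rfl] at h
    have hc : ((k + 1 : ℕ) : ℝ) = (k : ℝ) + 1 := by push_cast; ring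
    rw [hc] at h
    exact h
  set g : ℕ → ℝ := fun m => (if m = 0 then 0 else hpfCC ν (k + 1) (m - 1)) * hpfPhi ν m x
    with hg
  have hg0 : g 0 = 0 := by simp [hg]
  have hgs : ∀ m : ℕ, g (m + 1) = hpfCC ν (k + 1) m * hpfPhi ν (m + 1) x := by
    intro m; simp [hg]
  have hA : ∑ m ∈ Finset.range (k + 2 + 1), g m
      = ∑ m ∈ Finset.range (k + 2), hpfCC ν (k + 1) m * hpfPhi ν (m + 1) x := by
    rw [Finset.sum_range_succ' g (k + 2), hg0, add_zero]
    exact Finset.sum_congr rfl fun m _ => hgs m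
  simp only [hpfF]
  rw [show k + 1 + 1 = k + 2 from rfl]
  calc ∑ m ∈ Finset.range (k + 2 + 1), hpfCC ν (k + 2) m * hpfPhi ν m x
      = ∑ m ∈ Finset.range (k + 2 + 1),
          (g m + (4 * (m : ℝ) - 2 * ν + 2) * hpfCC ν (k + 1) m * hpfPhi ν m x
            - (ν - ((k : ℝ) + 1)) * (ν + ((k : ℝ) + 1) + 1)
              * (hpfCC ν k m * hpfPhi ν m x)) :=
        Finset.sum_congr rfl fun m _ => by rw [hm m]; simp only [hg]; ring
    _ = (∑ m ∈ Finset.range (k + 2 + 1), g m)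
        + (∑ m ∈ Finset.range (k + 2 + 1),
            (4 * (m : ℝ) - 2 * ν + 2) * hpfCC ν (k + 1) m * hpfPhi ν m x)
        - (ν - ((k : ℝ) + 1)) * (ν + ((k : ℝ) + 1) + 1)
            * ∑ m ∈ Finset.range (k + 2 + 1), hpfCC ν k m * hpfPhi ν m x := by
        rw [Finset.mul_sum, ← Finset.sum_add_distrib, ← Finset.sum_sub_distrib]
    _ = (∑ m ∈ Finset.range (k + 2), hpfCC ν (k + 1) m * hpfPhi ν (m + 1) x)
        + (∑ m ∈ Finset.range (k + 2),
            (4 * (m : ℝ) - 2 * ν + 2) * hpfCC ν (k + 1) m * hpfPhi ν m x)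
        - (ν - ((k : ℝ) + 1)) * (ν + ((k : ℝ) + 1) + 1)
            * ∑ m ∈ Finset.range (k + 1), hpfCC ν k m * hpfPhi ν m x := by
        rw [hA,
          Finset.sum_range_succ
            (fun m => (4 * (m : ℝ) - 2 * ν + 2) * hpfCC ν (k + 1) m * hpfPhi ν m x) (k + 2),
          Finset.sum_range_succ (fun m => hpfCC ν k m * hpfPhi ν m x) (k + 2),
          Finset.sum_range_succ (fun m => hpfCC ν k m * hpfPhi ν m x) (k + 1),
          hpfCC_zero ν (show k + 1 < k + 2 by omega),
          hpfCC_zero ν (show k < k + 1 by omega),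
          hpfCC_zero ν (show k < k + 2 by omega)]
        ring
    _ = x * (∑ m ∈ Finset.range (k + 2), hpfCC ν (k + 1) m * hpfPhi ν m x)
        - (ν - ((k : ℝ) + 1)) * (ν + ((k : ℝ) + 1) + 1)
            * ∑ m ∈ Finset.range (k + 1), hpfCC ν k m * hpfPhi ν m x := by
        rw [Finset.mul_sum, ← Finset.sum_add_distrib]
        have hterm : ∀ m ∈ Finset.range (k + 2),
            hpfCC ν (k + 1) m * hpfPhi ν (m + 1) x
              + (4 * (m : ℝ) - 2 * ν + 2) * hpfCC ν (k + 1) m * hpfPhi ν m x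
            = x * (hpfCC ν (k + 1) m * hpfPhi ν m x) := fun m _ => by
          rw [hpfPhi_succ]; ring
        rw [Finset.sum_congr rfl hterm]
        simp only [← Finset.mul_sum]

private lemma hpf_even (j : ℕ) (x : ℝ) :
    (∏ i ∈ Finset.range (2 * j), (x - (4 * (i : ℝ) - 2 * (2 * (j : ℝ)) + 2)))
      = ∏ k ∈ Finset.range j, (x ^ 2 - (4 * (k : ℝ) + 2) ^ 2) := by
  induction j with
  | zero => simp
  | succ j ih =>
    rw [show 2 * (j + 1) = (2 * j + 1) + 1 by ring, Finset.prod_range_succ,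
      Finset.prod_range_succ']
    have hcong : (∏ i ∈ Finset.range (2 * j),
          (x - (4 * ((i + 1 : ℕ) : ℝ) - 2 * (2 * ((j + 1 : ℕ) : ℝ)) + 2)))
        = ∏ i ∈ Finset.range (2 * j), (x - (4 * (i : ℝ) - 2 * (2 * (j : ℝ)) + 2)) :=
      Finset.prod_congr rfl fun i _ => by push_cast; ring
    rw [hcong, ih, Finset.prod_range_succ]
    push_cast
    ring

private lemma hpf_odd (j : ℕ) (x : ℝ) :
    (∏ i ∈ Finset.range (2 * j + 1), (x - (4 * (i : ℝ) - 2 * (2 * (j : ℝ) + 1) + 2)))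
      = x * ∏ k ∈ Finset.Icc 1 j, (x ^ 2 - (4 * (k : ℝ)) ^ 2) := by
  induction j with
  | zero => simp
  | succ j ih =>
    rw [show 2 * (j + 1) + 1 = (2 * j + 1 + 1) + 1 by ring, Finset.prod_range_succ,
      Finset.prod_range_succ']
    have hcong : (∏ i ∈ Finset.range (2 * j + 1),
          (x - (4 * ((i + 1 : ℕ) : ℝ) - 2 * (2 * ((j + 1 : ℕ) : ℝ) + 1) + 2)))
        = ∏ i ∈ Finset.range (2 * j + 1), (x - (4 * (i : ℝ) - 2 * (2 * (j : ℝ) + 1) + 2)) :=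
      Finset.prod_congr rfl fun i _ => by push_cast; ring
    rw [hcong, ih, Finset.prod_Icc_succ_top (show 1 ≤ j + 1 by omega)]
    push_cast
    ring

open Finset in
/-- The polynomials defined by `P₀ = 1`, `P₁ = x`,
`P_{n+1} = x Pₙ - (N-n)(N+n+1) P_{n-1}` (for `1 ≤ n ≤ N-1`) satisfy
`P_N(x) = ∏_{k=0}^{j-1} (x² - (4k+2)²)` when `N = 2j`, and
`P_N(x) = x ∏_{k=1}^{j} (x² - (4k)²)` when `N = 2j+1`. -/
theorem hahn_polynomial_factorization
    (N : ℕ) (hN : 0 < N) (P : ℕ → ℝ → ℝ)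
    (hP0 : ∀ x, P 0 x = 1)
    (hP1 : ∀ x, P 1 x = x)
    (hPrec : ∀ n, 1 ≤ n → n ≤ N - 1 → ∀ x,
      P (n + 1) x = x * P n x - ((N : ℝ) - (n : ℝ)) * ((N : ℝ) + (n : ℝ) + 1) * P (n - 1) x) :
    (∀ j : ℕ, N = 2 * j →
      ∀ x : ℝ, P N x = ∏ k ∈ Finset.range j, (x ^ 2 - (4 * (k : ℝ) + 2) ^ 2)) ∧
    (∀ j : ℕ, N = 2 * j + 1 →
      ∀ x : ℝ, P N x = x * ∏ k ∈ Finset.Icc 1 j, (x ^ 2 - (4 * (k : ℝ)) ^ 2)) := by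
  have key : ∀ n, n ≤ N → ∀ x, P n x = hpfF (N : ℝ) n x := by
    intro n
    induction n using Nat.strong_induction_on with
    | _ n ih =>
      rcases n with _ | n
      · intro _ x
        rw [hP0 x]
        simp [hpfF, hpfCC, hpfPhi]
      · rcases n with _ | k
        · intro _ x
          rw [hP1 x]
          simp [hpfF, hpfCC, hpfPhi, Finset.sum_range_succ, Finset.prod_range_succ,
            Finset.prod_Ico_eq_prod_range]
          ring
        · intro hle x
          rw [hPrec (k + 1) (by omega) (by omega) x,
            ih (k + 1) (by omega) (by omega), show k + 1 - 1 = k from rfl,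
            ih k (by omega) (by omega), hpfF_rec (N : ℝ) k x]
          push_cast
          ring
  have hPN : ∀ x : ℝ, P N x
      = ∏ i ∈ Finset.range N, (x - (4 * (i : ℝ) - 2 * (N : ℝ) + 2)) := by
    intro x
    rw [key N le_rfl x]
    simp only [hpfF]
    rw [Finset.sum_range_succ, hpfCC_diag]
    have hz : ∀ m ∈ Finset.range N, hpfCC (N : ℝ) N m * hpfPhi (N : ℝ) m x = 0 := by
      intro m hm
      simp only [Finset.mem_range] at hm
      have hc0 : hpfCC (N : ℝ) N m = 0 := by
        have hmem : N - 1 ∈ Finset.Ico m N := by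
          simp only [Finset.mem_Ico]; omega
        have hf : ((N - 1 : ℕ) : ℝ) + 1 - (N : ℝ) = 0 := by
          rw [Nat.cast_sub (by omega : 1 ≤ N)]; ring
        rw [hpfCC, Finset.prod_eq_zero hmem hf, mul_zero]
      rw [hc0, zero_mul]
    rw [Finset.sum_eq_zero hz, zero_add, one_mul, hpfPhi]
  constructor
  · intro j hj x
    subst hj
    rw [hPN x]
    have hcong : (∏ i ∈ Finset.range (2 * j),
          (x - (4 * (i : ℝ) - 2 * ((2 * j : ℕ) : ℝ) + 2)))
        = ∏ i ∈ Finset.range (2 * j), (x - (4 * (i : ℝ) - 2 * (2 * (j : ℝ)) + 2)) :=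
      Finset.prod_congr rfl fun i _ => by push_cast; ring
    rw [hcong, hpf_even]
  · intro j hj x
    subst hj
    rw [hPN x]
    have hcong : (∏ i ∈ Finset.range (2 * j + 1),
          (x - (4 * (i : ℝ) - 2 * ((2 * j + 1 : ℕ) : ℝ) + 2)))
        = ∏ i ∈ Finset.range (2 * j + 1), (x - (4 * (i : ℝ) - 2 * (2 * (j : ℝ) + 1) + 2)) :=
      Finset.prod_congr rfl fun i _ => by push_cast; ring
    rw [hcong, hpf_odd]
end

section
/- Let Ω ⊆ ℝ be an open set and let u_n, b_n : Ω → ℝ (n ≥ −1) be functions, twice differentiable on Ω, satisfying the Toda chain equations b_n' = u_{n+1} − u_n for n ≥ 0 and u_n' = u_n(b_n − b_{n−1}) for n ≥ 0, with initial data u_0(t) = t, b_0(t) = 1/t and b_{−1}(t) = 0 on Ω (so 0 ∉ Ω), and with u_n(t) ≠ 0 on Ω for all n ≥ 0. Then for every integer N ≥ 0 the function V = b_N satisfies the Painlevé-II equation V'' = 2V³ − 4tV + 4(N+1) on Ω, i.e. b_N is a rational solution of Painlevé-II with parameter α = N + 1/2. -/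
/-!
Along the Toda chain with this initial data the two quantities
`u (n+1) + u n + (b n)²` and `u n * (b n + b (n-1))` are pinned down: the first is `2t`, the
second is `2n+1`. Each identity propagates to the other by differentiation: the derivative of the
first is the increment of the second in `n`, and the derivative of `u (n+1) * (b (n+1) + b n)` is
`u (n+1)` times the increment of the first. Writing `b N'' = u (N+1)' - u N'` through the chain
and substituting both identities gives Painlevé-II.
-/

open Set

structure IsTodaChainOn (Ω : Set ℝ) (u b : ℤ → ℝ → ℝ) : Prop where
  differentiableAt_b : ∀ n : ℤ, 0 ≤ n → ∀ t ∈ Ω, DifferentiableAt ℝ (b n) t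
  differentiableAt_u : ∀ n : ℤ, 0 ≤ n → ∀ t ∈ Ω, DifferentiableAt ℝ (u n) t
  deriv_b : ∀ n : ℤ, 0 ≤ n → ∀ t ∈ Ω, deriv (b n) t = u (n + 1) t - u n t
  deriv_u : ∀ n : ℤ, 0 ≤ n → ∀ t ∈ Ω, deriv (u n) t = u n t * (b n t - b (n - 1) t)

theorem IsOpen.hasDerivAt_unique_of_eqOn {Ω : Set ℝ} (hΩ : IsOpen Ω) {f g : ℝ → ℝ}
    (hfg : EqOn f g Ω) {t f' g' : ℝ} (ht : t ∈ Ω) (hf : HasDerivAt f f' t)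
    (hg : HasDerivAt g g' t) : f' = g' := by
  rw [← hf.deriv, ← hg.deriv]
  exact hfg.deriv hΩ ht

namespace IsTodaChainOn

variable {Ω : Set ℝ} {u b : ℤ → ℝ → ℝ}

theorem hasDerivAt_b (hT : IsTodaChainOn Ω u b) {n : ℤ} (hn : 0 ≤ n) {t : ℝ} (ht : t ∈ Ω) :
    HasDerivAt (b n) (u (n + 1) t - u n t) t :=
  hT.deriv_b n hn t ht ▸ (hT.differentiableAt_b n hn t ht).hasDerivAt

theorem hasDerivAt_u (hT : IsTodaChainOn Ω u b) {n : ℤ} (hn : 0 ≤ n) {t : ℝ} (ht : t ∈ Ω) :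
    HasDerivAt (u n) (u n t * (b n t - b (n - 1) t)) t :=
  hT.deriv_u n hn t ht ▸ (hT.differentiableAt_u n hn t ht).hasDerivAt

theorem hasDerivAt_u_add_one (hT : IsTodaChainOn Ω u b) {n : ℤ} (hn : 0 ≤ n) {t : ℝ}
    (ht : t ∈ Ω) : HasDerivAt (u (n + 1)) (u (n + 1) t * (b (n + 1) t - b n t)) t := by
  simpa using hT.hasDerivAt_u (n := n + 1) (by omega) ht

theorem hasDerivAt_add_add_sq (hT : IsTodaChainOn Ω u b) {n : ℤ} (hn : 0 ≤ n) {t : ℝ}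
    (ht : t ∈ Ω) :
    HasDerivAt (fun s ↦ u (n + 1) s + u n s + b n s ^ 2)
      (u (n + 1) t * (b (n + 1) t + b n t) - u n t * (b n t + b (n - 1) t)) t := by
  refine (((hT.hasDerivAt_u_add_one hn ht).add (hT.hasDerivAt_u hn ht)).add
    ((hT.hasDerivAt_b hn ht).pow 2)).congr_deriv ?_
  push_cast
  ring

theorem hasDerivAt_mul_add (hT : IsTodaChainOn Ω u b) {n : ℤ} (hn : 0 ≤ n) {t : ℝ}
    (ht : t ∈ Ω) :
    HasDerivAt (fun s ↦ u (n + 1) s * (b (n + 1) s + b n s))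
      (u (n + 1) t * ((u (n + 1 + 1) t + u (n + 1) t + b (n + 1) t ^ 2)
        - (u (n + 1) t + u n t + b n t ^ 2))) t := by
  refine ((hT.hasDerivAt_u_add_one hn ht).mul
    ((hT.hasDerivAt_b (n := n + 1) (by omega) ht).add (hT.hasDerivAt_b hn ht))).congr_deriv ?_
  simp only [Pi.add_apply]
  ring

theorem add_add_sq_eq_and_mul_add_eq (hT : IsTodaChainOn Ω u b) (hΩ : IsOpen Ω)
    (hu : ∀ n : ℤ, 0 ≤ n → ∀ t ∈ Ω, u n t ≠ 0)
    (hsum₀ : ∀ t ∈ Ω, u 1 t + u 0 t + b 0 t ^ 2 = 2 * t)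
    (hprod₀ : ∀ t ∈ Ω, u 0 t * (b 0 t + b (-1) t) = 1) :
    ∀ n : ℤ, 0 ≤ n → ∀ t ∈ Ω,
      u (n + 1) t + u n t + b n t ^ 2 = 2 * t ∧ u n t * (b n t + b (n - 1) t) = 2 * n + 1 := by
  intro n hn
  induction n, hn using Int.leInduction with
  | base => simpa using fun t ht ↦ ⟨hsum₀ t ht, hprod₀ t ht⟩
  | succ n hn ih =>
    have hprod : ∀ t ∈ Ω, u (n + 1) t * (b (n + 1) t + b n t) = 2 * n + 3 := by
      intro t ht
      have hderiv := hΩ.hasDerivAt_unique_of_eqOn (fun s hs ↦ (ih s hs).1) ht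
        (hT.hasDerivAt_add_add_sq hn ht) ((hasDerivAt_id t).const_mul 2)
      linarith [(ih t ht).2]
    have hsum : ∀ t ∈ Ω, u (n + 1 + 1) t + u (n + 1) t + b (n + 1) t ^ 2 = 2 * t := by
      intro t ht
      have hderiv := hΩ.hasDerivAt_unique_of_eqOn hprod ht
        (hT.hasDerivAt_mul_add hn ht) (hasDerivAt_const t _)
      have hincr := (mul_eq_zero.mp hderiv).resolve_left (hu (n + 1) (by omega) t ht)
      linarith [(ih t ht).1]
    intro t ht
    refine ⟨hsum t ht, ?_⟩
    rw [add_sub_cancel_right, hprod t ht]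
    push_cast
    ring

theorem deriv_deriv_b (hT : IsTodaChainOn Ω u b) (hΩ : IsOpen Ω) {n : ℤ} (hn : 0 ≤ n) {t : ℝ}
    (ht : t ∈ Ω) :
    deriv (deriv (b n)) t = u (n + 1) t * (b (n + 1) t - b n t)
      - u n t * (b n t - b (n - 1) t) := by
  have hEq : EqOn (deriv (b n)) (fun s ↦ u (n + 1) s - u n s) Ω := hT.deriv_b n hn
  rw [hEq.deriv hΩ ht]
  exact ((hT.hasDerivAt_u_add_one hn ht).sub (hT.hasDerivAt_u hn ht)).deriv

theorem add_add_sq_zero_eq_of_linear_potential (hT : IsTodaChainOn Ω u b) (hΩ : IsOpen Ω)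
    (h0 : (0 : ℝ) ∉ Ω) (hu0 : ∀ t ∈ Ω, u 0 t = t) (hb0 : ∀ t ∈ Ω, b 0 t = 1 / t) :
    ∀ t ∈ Ω, u 1 t + u 0 t + b 0 t ^ 2 = 2 * t := by
  intro t ht
  have hb₀' := hΩ.hasDerivAt_unique_of_eqOn (fun s hs ↦ (hb0 s hs).trans (one_div s)) ht
    (hT.hasDerivAt_b le_rfl ht) (hasDerivAt_inv (ne_of_mem_of_not_mem ht h0))
  rw [zero_add, hu0 t ht] at hb₀'
  rw [hb0 t ht, hu0 t ht, one_div, inv_pow]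
  linarith

end IsTodaChainOn

theorem toda_linear_potential_painleveII_general
    (Ω : Set ℝ) (hΩopen : IsOpen Ω) (h0 : (0 : ℝ) ∉ Ω)
    (u b : ℤ → ℝ → ℝ)
    (hbd : ∀ n : ℤ, -1 ≤ n → ∀ t ∈ Ω, DifferentiableAt ℝ (b n) t)
    (hud : ∀ n : ℤ, -1 ≤ n → ∀ t ∈ Ω, DifferentiableAt ℝ (u n) t)
    (hToda_b : ∀ n : ℤ, 0 ≤ n → ∀ t ∈ Ω, deriv (b n) t = u (n + 1) t - u n t)
    (hToda_u : ∀ n : ℤ, 0 ≤ n → ∀ t ∈ Ω,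
      deriv (u n) t = u n t * (b n t - b (n - 1) t))
    (hu0 : ∀ t ∈ Ω, u 0 t = t)
    (hb0 : ∀ t ∈ Ω, b 0 t = 1 / t)
    (hbm1 : ∀ t ∈ Ω, b (-1) t = 0)
    (hune : ∀ n : ℤ, 0 ≤ n → ∀ t ∈ Ω, u n t ≠ 0) :
    ∀ N : ℕ, ∀ t ∈ Ω,
      deriv (deriv (b (N : ℤ))) t
        = 2 * (b (N : ℤ) t) ^ 3 - 4 * t * b (N : ℤ) t + 4 * ((N : ℝ) + 1) := by
  have hT : IsTodaChainOn Ω u b :=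
    ⟨fun n hn ↦ hbd n (by omega), fun n hn ↦ hud n (by omega), hToda_b, hToda_u⟩
  have hsum₀ := hT.add_add_sq_zero_eq_of_linear_potential hΩopen h0 hu0 hb0
  have hprod₀ : ∀ t ∈ Ω, u 0 t * (b 0 t + b (-1) t) = 1 := by
    intro t ht
    rw [hu0 t ht, hb0 t ht, hbm1 t ht, add_zero, mul_one_div_cancel (ne_of_mem_of_not_mem ht h0)]
  have hinvariants := hT.add_add_sq_eq_and_mul_add_eq hΩopen hune hsum₀ hprod₀
  intro N t ht
  have hN : (0 : ℤ) ≤ N := N.cast_nonneg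
  obtain ⟨hsum, hprod⟩ := hinvariants N hN t ht
  have hprod₁ := (hinvariants (N + 1) (by omega) t ht).2
  rw [add_sub_cancel_right] at hprod₁
  rw [hT.deriv_deriv_b hΩopen hN ht]
  push_cast at hprod hprod₁ ⊢
  linear_combination hprod₁ + hprod - 2 * b N t * hsum

/-- For the Toda chain solution with initial data `u₀(t) = t`,
`b₀(t) = 1/t`, `b₋₁ = 0` on an open set `Ω` (with `0 ∉ Ω` and `uₙ ≠ 0` on `Ω`),
every `b_N` satisfies the Painlevé-II equation
`V'' = 2V³ - 4tV + 4(N+1)`, i.e. `b_N` is a rational solution of Painlevé-II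
with parameter `α = N + 1/2`. -/
theorem toda_linear_potential_painleveII
    (Ω : Set ℝ) (hΩopen : IsOpen Ω) (h0 : (0 : ℝ) ∉ Ω)
    (u b : ℤ → ℝ → ℝ)
    (hbd : ∀ n : ℤ, -1 ≤ n → ∀ t ∈ Ω, DifferentiableAt ℝ (b n) t)
    (hbd2 : ∀ n : ℤ, -1 ≤ n → ∀ t ∈ Ω, DifferentiableAt ℝ (deriv (b n)) t)
    (hud : ∀ n : ℤ, -1 ≤ n → ∀ t ∈ Ω, DifferentiableAt ℝ (u n) t)
    (hud2 : ∀ n : ℤ, -1 ≤ n → ∀ t ∈ Ω, DifferentiableAt ℝ (deriv (u n)) t)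
    (hToda_b : ∀ n : ℤ, 0 ≤ n → ∀ t ∈ Ω, deriv (b n) t = u (n + 1) t - u n t)
    (hToda_u : ∀ n : ℤ, 0 ≤ n → ∀ t ∈ Ω,
      deriv (u n) t = u n t * (b n t - b (n - 1) t))
    (hu0 : ∀ t ∈ Ω, u 0 t = t)
    (hb0 : ∀ t ∈ Ω, b 0 t = 1 / t)
    (hbm1 : ∀ t ∈ Ω, b (-1) t = 0)
    (hune : ∀ n : ℤ, 0 ≤ n → ∀ t ∈ Ω, u n t ≠ 0) :
    ∀ N : ℕ, ∀ t ∈ Ω,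
      deriv (deriv (b (N : ℤ))) t
        = 2 * (b (N : ℤ) t) ^ 3 - 4 * t * b (N : ℤ) t + 4 * ((N : ℝ) + 1) :=
  toda_linear_potential_painleveII_general Ω hΩopen h0 u b hbd hud hToda_b hToda_u hu0 hb0 hbm1 hune
end

section
/- Let g : ℝ → ℝ be twice differentiable and satisfy the Airy equation g''(x) = x·g(x) for all x. Fix t ∈ ℝ, and for real z with g(z²/4 − t) ≠ 0 define F(z) = −g'(z²/4 − t)/g(z²/4 − t) + z/2. Then F is differentiable at every such z and satisfies the Laguerre–Hahn Riccati equation 2 F'(z) = z F(z)² − z² F(z) + t z + 1. -/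
/-! The substitution `u = -g'/g` turns `g'' = q g` into the Riccati equation `u' = u² - q`; for
the Airy equation `q(x) = x`. With `ζ = z²/4 - t` and `F(z) = u(ζ) + z/2`, the chain rule gives
`2F' = z (u(ζ)² - ζ) + 1`, and substituting `u(ζ) = F - z/2` the terms `z³/4` cancel, leaving
`z F² - z² F + t z + 1`. -/

variable {𝕜 : Type*} [NontriviallyNormedField 𝕜]

theorem hasDerivAt_neg_deriv_div_of_hasDerivAt_deriv {g : 𝕜 → 𝕜} {q x : 𝕜}
    (hg : DifferentiableAt 𝕜 g x) (hg' : HasDerivAt (deriv g) (q * g x) x) (hx : g x ≠ 0) :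
    HasDerivAt (fun y => -deriv g y / g y) ((-deriv g x / g x) ^ 2 - q) x :=
  (hg'.fun_neg.fun_div hg.hasDerivAt hx).congr_deriv (by field_simp; ring)

/-- If `g` is a twice-differentiable solution of the Airy equation
`g'' = x g`, then for fixed `t` the function
`F(z) = -g'(z²/4 - t)/g(z²/4 - t) + z/2` is differentiable at every `z` with
`g(z²/4 - t) ≠ 0` and satisfies the Laguerre–Hahn Riccati equation
`2F'(z) = z F(z)² - z² F(z) + t z + 1`. -/
theorem airy_stieltjes_laguerre_hahn
    (g : ℝ → ℝ) (hg : Differentiable ℝ g) (hg' : Differentiable ℝ (deriv g))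
    (hAiry : ∀ x : ℝ, deriv (deriv g) x = x * g x) (t : ℝ) :
    ∀ z : ℝ, g (z ^ 2 / 4 - t) ≠ 0 →
      DifferentiableAt ℝ
        (fun w => -deriv g (w ^ 2 / 4 - t) / g (w ^ 2 / 4 - t) + w / 2) z ∧
      2 * deriv (fun w => -deriv g (w ^ 2 / 4 - t) / g (w ^ 2 / 4 - t) + w / 2) z
        = z * (-deriv g (z ^ 2 / 4 - t) / g (z ^ 2 / 4 - t) + z / 2) ^ 2
          - z ^ 2 * (-deriv g (z ^ 2 / 4 - t) / g (z ^ 2 / 4 - t) + z / 2)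
          + t * z + 1 := by
  intro z hz
  have hζ : HasDerivAt (fun w : ℝ => w ^ 2 / 4 - t) (z / 2) z :=
    (((hasDerivAt_pow 2 z).div_const 4).sub_const t).congr_deriv (by ring)
  have hriccati := hasDerivAt_neg_deriv_div_of_hasDerivAt_deriv (hg _)
    (hAiry (z ^ 2 / 4 - t) ▸ (hg' _).hasDerivAt) hz
  have hF := (hriccati.comp z hζ).fun_add ((hasDerivAt_id' z).div_const 2)
  simp only [Function.comp_def] at hF
  refine ⟨hF.differentiableAt, ?_⟩
  rw [hF.deriv]
  ring
end
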